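/- arXiv:1407.1569 — 7 statements merged into one kernel-verified Lean document; each statement's English description precedes it below -/
import Mathlib

section
/- Let n ≥ 1, let L ∈ ℝ^{n×n} be a symmetric positive semidefinite matrix with L·1 = 0 and rank n − 1, and let L⁺ be its Moore–Penrose pseudoinverse. Fix a node ℓ ∈ {1,…,n} and a real k > 0, and let e_ℓ be the ℓ-th standard basis vector. Then the matrix N = L + k·e_ℓ e_ℓᵀ is invertible and N⁻¹ = L⁺ − (L⁺ e_ℓ)1ᵀ − 1(e_ℓᵀ L⁺) + ((1 + k·L⁺_{ℓ,ℓ})/k)·1 1ᵀ, where 1 is the all-ones vector. In particular, N⁻¹_{i,j} = L⁺_{i,j} − L⁺_{i,ℓ} − L⁺_{j,ℓ} + L⁺_{ℓ,ℓ} + 1/k for all i, j. -/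
/-!
Since `L` is symmetric with kernel spanned by `𝟙`, the Penrose equations force `L⁺` to be
symmetric and `L L⁺ = I - J / n` (the orthogonal projector onto `𝟙ᗮ`). For the claimed inverse
`M`, the terms of `M` that are constant along columns are killed by `L`, so
`L M = L L⁺ - (L L⁺ eₗ) 𝟙ᵀ = I - eₗ 𝟙ᵀ`, while row `ℓ` of `M` is `𝟙ᵀ / k`, so
`k eₗ eₗᵀ M = eₗ 𝟙ᵀ`. Hence `N M = I`.
-/

open Matrix

namespace Matrix

variable {ι K : Type*} [Fintype ι]

theorem transpose_eq_of_penrose [CommRing K] {L Lp : Matrix ι ι K} (hL : Lᵀ = L)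
    (hp1 : L * Lp * L = L) (hp2 : Lp * L * Lp = Lp)
    (hp3 : (L * Lp)ᵀ = L * Lp) (hp4 : (Lp * L)ᵀ = Lp * L) : Lpᵀ = Lp := by
  have hC1 : Lpᵀ * L = L * Lp := by rw [← hp3, transpose_mul, hL]
  have hC2 : L * Lpᵀ = Lp * L := by rw [← hp4, transpose_mul, hL]
  have hcomm : L * Lp = Lp * L := by
    calc L * Lp = (Lpᵀ * L) * (Lp * L) := by rw [Matrix.mul_assoc, ← Matrix.mul_assoc L, hp1, hC1]
    _ = (L * Lp * L) * Lpᵀ := by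
      rw [hC1, ← hC2, Matrix.mul_assoc, Matrix.mul_assoc, Matrix.mul_assoc]
    _ = Lp * L := by rw [hp1, hC2]
  calc Lpᵀ = Lpᵀ * (Lp * L)ᵀ := by rw [← transpose_mul, hp2]
  _ = Lpᵀ * L * Lp := by rw [hp4, ← hcomm, Matrix.mul_assoc]
  _ = Lp := by rw [hC1, hcomm, hp2]

theorem ker_mulVecLin_eq_span_one [Field K] [Nonempty ι] {L : Matrix ι ι K}
    (h1 : L *ᵥ 1 = 0) (hrank : L.rank = Fintype.card ι - 1) :
    LinearMap.ker L.mulVecLin = K ∙ 1 := by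
  have hrank_ker : Module.finrank K (LinearMap.ker L.mulVecLin) = 1 := by
    have h := L.mulVecLin.finrank_range_add_finrank_ker
    rw [Module.finrank_fintype_fun_eq_card] at h
    change L.rank + _ = _ at h
    have := Fintype.card_pos (α := ι)
    omega
  refine (Submodule.eq_of_le_of_finrank_le ?_ ?_).symm
  · rw [Submodule.span_singleton_le_iff_mem]; exact h1
  · rw [hrank_ker, finrank_span_singleton one_ne_zero]

theorem mul_eq_one_sub_inv_card_smul_of_penrose [Field K] [DecidableEq ι] [Nonempty ι]
    {L Lp : Matrix ι ι K} (hL : Lᵀ = L) (h1 : L *ᵥ 1 = 0) (hrank : L.rank = Fintype.card ι - 1)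
    (hp1 : L * Lp * L = L) (hp3 : (L * Lp)ᵀ = L * Lp) :
    L * Lp = 1 - (Fintype.card ι : K)⁻¹ • of (fun _ _ => 1) := by
  set Q := 1 - L * Lp with hQ
  have hLQ : L * Q = 0 := by
    have : L * (L * Lp) = L := by
      rw [← transpose_transpose (L * _), transpose_mul, hp3, hL, hp1, hL]
    rw [hQ, Matrix.mul_sub, Matrix.mul_one, this, sub_self]
  have hQT : Qᵀ = Q := by rw [hQ, transpose_sub, transpose_one, hp3]
  have hcol : ∀ i i' j, Q i j = Q i' j := by
    intro i i' j
    have hmem : (fun m => Q m j) ∈ K ∙ 1 := by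
      rw [← ker_mulVecLin_eq_span_one h1 hrank, LinearMap.mem_ker, mulVecLin_apply]
      funext m
      simpa [mulVec, dotProduct, mul_apply] using congrFun (congrFun hLQ m) j
    obtain ⟨c, hc⟩ := Submodule.mem_span_singleton.1 hmem
    rw [← congrFun hc i, ← congrFun hc i']
    simp
  obtain ⟨i₀⟩ := ‹Nonempty ι›
  have hconst : ∀ i j, Q i j = Q i₀ i₀ := fun i j =>
    calc Q i j = Q j i₀ := (hcol i i₀ j).trans (congrFun (congrFun hQT i₀) j).symm
    _ = Q i₀ i₀ := hcol j i₀ i₀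
  have hsum : (Fintype.card ι : K) * Q i₀ i₀ = 1 := by
    have hQ1 : Q *ᵥ 1 = 1 := by
      rw [hQ, sub_mulVec, one_mulVec, ← hp3, transpose_mul, hL, ← mulVec_mulVec, h1,
        mulVec_zero, sub_zero]
    simpa [mulVec, dotProduct, hconst i₀] using congrFun hQ1 i₀
  ext i j
  have hQij : Q i j = (1 : Matrix ι ι K) i j - (L * Lp) i j := rfl
  rw [hconst, eq_inv_of_mul_eq_one_right hsum] at hQij
  simp only [sub_apply, smul_apply, of_apply, smul_eq_mul, mul_one]
  linear_combination hQij

theorem add_smul_single_mul_eq_one [Field K] [DecidableEq ι] {L Lp : Matrix ι ι K} {c : K}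
    (h1 : L *ᵥ 1 = 0) (hLLp : L * Lp = 1 - c • of (fun _ _ => 1)) (ℓ : ι) {k : K} (hk : k ≠ 0) :
    (L + k • single ℓ ℓ 1) * (Lp - of (fun i _ => Lp i ℓ) - of (fun _ j => Lp ℓ j)
      + ((1 + k * Lp ℓ ℓ) / k) • of (fun _ _ => 1)) = 1 := by
  set M := Lp - of (fun i _ => Lp i ℓ) - of (fun _ j => Lp ℓ j)
    + ((1 + k * Lp ℓ ℓ) / k) • of (fun _ _ => 1)
  have hrow : ∀ i, ∑ m, L i m = 0 := fun i => by simpa [mulVec, dotProduct] using congrFun h1 i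
  have hL_of_const : ∀ f : ι → K, L * of (fun _ j => f j) = 0 := fun f => by
    ext i j; simp [mul_apply, ← Finset.sum_mul, hrow]
  have hL_of_col : L * of (fun i (_ : ι) => Lp i ℓ) = of (fun i _ => (L * Lp) i ℓ) := by
    ext; simp [mul_apply]
  have hLM : ∀ i j, (L * M) i j = (1 : Matrix ι ι K) i j - (1 : Matrix ι ι K) i ℓ := by
    intro i j
    rw [Matrix.mul_add, Matrix.mul_sub, Matrix.mul_sub, hL_of_col, hL_of_const, Matrix.mul_smul,
      hL_of_const (fun _ => 1), hLLp]
    simp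
  have hM_row : ∀ j, M ℓ j = k⁻¹ := fun j => by
    simp only [M, add_apply, sub_apply, smul_apply, of_apply, smul_eq_mul]
    field_simp
    ring
  ext i j
  rw [Matrix.add_mul, add_apply, hLM, smul_mul, smul_apply, smul_eq_mul]
  by_cases hi : i = ℓ
  · subst hi
    rw [single_mul_apply_same, hM_row]
    field_simp
    simp
  · rw [single_mul_apply_of_ne (h := hi)]
    simp [one_apply, hi]

end Matrix

theorem stmt_2_general {n : ℕ} (L Lp : Matrix (Fin n) (Fin n) ℝ)
    (hL : L.PosSemidef) (hL1 : L *ᵥ (fun _ => (1 : ℝ)) = 0) (hrank : L.rank = n - 1)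
    (hp1 : L * Lp * L = L) (hp2 : Lp * L * Lp = Lp)
    (hp3 : (L * Lp)ᵀ = L * Lp) (hp4 : (Lp * L)ᵀ = Lp * L)
    (ℓ : Fin n) (k : ℝ) (hk : 0 < k) :
    IsUnit (L + k • Matrix.single ℓ ℓ (1 : ℝ)) ∧
    (L + k • Matrix.single ℓ ℓ (1 : ℝ))⁻¹ =
      Lp - Matrix.of (fun i _ => Lp i ℓ) - Matrix.of (fun _ j => Lp ℓ j)
        + ((1 + k * Lp ℓ ℓ) / k) • Matrix.of (fun _ _ => (1 : ℝ)) ∧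
    ∀ i j, (L + k • Matrix.single ℓ ℓ (1 : ℝ))⁻¹ i j =
      Lp i j - Lp i ℓ - Lp j ℓ + Lp ℓ ℓ + 1 / k := by
  have : Nonempty (Fin n) := ⟨ℓ⟩
  have hLT : Lᵀ = L := by simpa using hL.isHermitian.eq
  have hLLp := mul_eq_one_sub_inv_card_smul_of_penrose hLT hL1 (by simpa using hrank) hp1 hp3
  have hNM := add_smul_single_mul_eq_one hL1 hLLp ℓ hk.ne'
  have hinv := inv_eq_right_inv hNM
  refine ⟨(isUnit_iff_isUnit_det _).2 (isUnit_det_of_right_inverse hNM), hinv, fun i j => ?_⟩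
  have hLp_symm : Lp ℓ j = Lp j ℓ := by
    rw [← transpose_apply Lp, transpose_eq_of_penrose hLT hp1 hp2 hp3 hp4]
  rw [hinv]
  simp only [Matrix.add_apply, Matrix.sub_apply, Matrix.smul_apply, of_apply, smul_eq_mul, mul_one,
    hLp_symm]
  field_simp
  ring

/-- For the Laplacian `L` of a connected undirected weighted graph, its
Moore–Penrose pseudoinverse `Lp`, a node `ℓ` and `k > 0`, the matrix
`N = L + k eₗ eₗᵀ` is invertible and
`N⁻¹ = L⁺ − (L⁺eₗ)1ᵀ − 1(eₗᵀL⁺) + ((1 + k L⁺ₗₗ)/k) 1 1ᵀ`; entrywise,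
`N⁻¹ᵢⱼ = L⁺ᵢⱼ − L⁺ᵢₗ − L⁺ⱼₗ + L⁺ₗₗ + 1/k`. -/
theorem stmt_2 {n : ℕ} (hn : 1 ≤ n) (L Lp : Matrix (Fin n) (Fin n) ℝ)
    (hL : L.PosSemidef) (hL1 : L *ᵥ (fun _ => (1 : ℝ)) = 0) (hrank : L.rank = n - 1)
    (hp1 : L * Lp * L = L) (hp2 : Lp * L * Lp = Lp)
    (hp3 : (L * Lp)ᵀ = L * Lp) (hp4 : (Lp * L)ᵀ = Lp * L)
    (ℓ : Fin n) (k : ℝ) (hk : 0 < k) :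
    IsUnit (L + k • Matrix.single ℓ ℓ (1 : ℝ)) ∧
    (L + k • Matrix.single ℓ ℓ (1 : ℝ))⁻¹ =
      Lp - Matrix.of (fun i _ => Lp i ℓ) - Matrix.of (fun _ j => Lp ℓ j)
        + ((1 + k * Lp ℓ ℓ) / k) • Matrix.of (fun _ _ => (1 : ℝ)) ∧
    ∀ i j, (L + k • Matrix.single ℓ ℓ (1 : ℝ))⁻¹ i j =
      Lp i j - Lp i ℓ - Lp j ℓ + Lp ℓ ℓ + 1 / k :=
  stmt_2_general L Lp hL hL1 hrank hp1 hp2 hp3 hp4 ℓ k hk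
end

section
/- Let n ≥ 1, let L ∈ ℝ^{n×n} be a symmetric positive semidefinite matrix with L·1 = 0 and rank n − 1, and let L⁺ be its Moore–Penrose pseudoinverse. Fix a single leader node s ∈ {1,…,n} and a gain k > 0, and let E_{ss} be the n×n matrix with 1 in entry (s,s) and zeros elsewhere. Then L + k·E_{ss} is invertible and tr((L + k·E_{ss})⁻¹) = n/k + tr(L⁺) + n·L⁺_{s,s}. (Consequently the total system error with one noise-corrupted leader s equals (σ²/2)(n/k + tr(L⁺) + n·L⁺_{s,s}) = (nσ²/2)(1/k + 1/c_s), where 1/c_s = L⁺_{s,s} + tr(L⁺)/n is the reciprocal information centrality of s.) -/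
/-!
As `L` is symmetric with `L 1 = 0`, the Penrose equations force `Lp 1 = 0` and `1ᵀ Lp = 0`. Hence
`L * Lp - (1 - J / n)` (`J` the all-ones matrix) vanishes on `range L` and on `1`, which together
span everything because `rank L = n - 1` and `1ᵀ L = 0`; so `L * Lp = 1 - J / n`. With this,
`X = Lp - Lp eₛ 1ᵀ - 1 eₛᵀ Lp + (k⁻¹ + Lpₛₛ) J` satisfies `L X = 1 - eₛ 1ᵀ` and `k Eₛₛ X = eₛ 1ᵀ`,
so it is the inverse of `L + k Eₛₛ`, and its trace is read off from the zero row and column sums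
of `Lp`.
-/

open Matrix

namespace Matrix

variable {ι : Type*} [Fintype ι]

section CommRing

variable {R : Type*} [CommRing R] {L Lp : Matrix ι ι R} {v : ι → R}

theorem mulVec_eq_zero_of_vecMul_eq_zero (hp2 : Lp * L * Lp = Lp) (hp3 : (L * Lp)ᵀ = L * Lp)
    (hv : v ᵥ* L = 0) : Lp *ᵥ v = 0 :=
  calc Lp *ᵥ v = (Lp * (L * Lp)ᵀ) *ᵥ v := by rw [hp3, ← Matrix.mul_assoc, hp2]
    _ = (Lp * Lpᵀ) *ᵥ (Lᵀ *ᵥ v) := by rw [transpose_mul, mulVec_mulVec, Matrix.mul_assoc]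
    _ = 0 := by rw [mulVec_transpose, hv, mulVec_zero]

theorem vecMul_eq_zero_of_mulVec_eq_zero (hp2 : Lp * L * Lp = Lp) (hp4 : (Lp * L)ᵀ = Lp * L)
    (hv : L *ᵥ v = 0) : v ᵥ* Lp = 0 :=
  calc v ᵥ* Lp = v ᵥ* ((Lp * L)ᵀ * Lp) := by rw [hp4, hp2]
    _ = (v ᵥ* Lᵀ) ᵥ* (Lpᵀ * Lp) := by rw [transpose_mul, vecMul_vecMul, Matrix.mul_assoc]
    _ = 0 := by rw [vecMul_transpose, hv, zero_vecMul]

end CommRing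

section Field

variable {K : Type*} [Field K]

theorem range_mulVecLin_sup_span_eq_top {L : Matrix ι ι K} {u v : ι → K} (hu : u ᵥ* L = 0)
    (huv : u ⬝ᵥ v ≠ 0) (hrank : L.rank = Fintype.card ι - 1) :
    LinearMap.range L.mulVecLin ⊔ Submodule.span K {v} = ⊤ := by
  have hv : v ≠ 0 := by rintro rfl; simp at huv
  have hinf : LinearMap.range L.mulVecLin ⊓ Submodule.span K {v} = ⊥ := by
    refine (Submodule.eq_bot_iff _).mpr ?_
    rintro x ⟨⟨w, rfl⟩, hx⟩
    obtain ⟨c, hc⟩ := Submodule.mem_span_singleton.mp hx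
    have hc0 : c * (u ⬝ᵥ v) = 0 := by
      rw [← smul_eq_mul, ← dotProduct_smul, hc, mulVecLin_apply, dotProduct_mulVec, hu,
        zero_dotProduct]
    rw [← hc, (mul_eq_zero.mp hc0).resolve_right huv, zero_smul]
  have hcard : 0 < Fintype.card ι := by
    obtain ⟨i, -⟩ := Function.ne_iff.mp hv
    exact Fintype.card_pos_iff.mpr ⟨i⟩
  have hdim := Submodule.finrank_sup_add_finrank_inf_eq (LinearMap.range L.mulVecLin)
    (Submodule.span K {v})
  rw [hinf, finrank_bot, finrank_span_singleton hv] at hdim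
  apply Submodule.eq_top_of_finrank_eq
  rw [Module.finrank_fintype_fun_eq_card]
  change _ + 0 = L.rank + 1 at hdim
  omega

theorem eq_zero_of_mul_eq_zero_of_mulVec_eq_zero {A L : Matrix ι ι K} {v : ι → K}
    (hspan : LinearMap.range L.mulVecLin ⊔ Submodule.span K {v} = ⊤)
    (hAL : A * L = 0) (hAv : A *ᵥ v = 0) : A = 0 := by
  have hker : LinearMap.ker A.mulVecLin = ⊤ := by
    refine top_le_iff.mp (hspan ▸ sup_le ?_ ?_)
    · rw [LinearMap.range_le_ker_iff, ← mulVecLin_mul, hAL, mulVecLin_zero]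
    · rwa [Submodule.span_singleton_le_iff_mem, LinearMap.mem_ker]
  exact ext_iff_mulVec.mpr fun w => by
    simpa using LinearMap.congr_fun (LinearMap.ker_eq_top.mp hker) w

theorem mul_eq_one_sub_card_inv_smul_of_rank [DecidableEq ι] [Nonempty ι] [CharZero K]
    {L Lp : Matrix ι ι K} (h1L : 1 ᵥ* L = 0) (hrank : L.rank = Fintype.card ι - 1)
    (hp1 : L * Lp * L = L) (hLp1 : Lp *ᵥ 1 = 0) :
    L * Lp = 1 - (Fintype.card ι : K)⁻¹ • of fun _ _ => 1 := by
  have hn : (Fintype.card ι : K) ≠ 0 := Nat.cast_ne_zero.mpr Fintype.card_ne_zero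
  have hspan := range_mulVecLin_sup_span_eq_top (v := 1) h1L (by simp [hn]) hrank
  rw [eq_comm, ← sub_eq_zero]
  refine eq_zero_of_mul_eq_zero_of_mulVec_eq_zero hspan ?_ ?_
  · have hJL : (of fun _ _ => (1 : K)) * L = 0 := by
      ext i j
      simpa [mul_apply, vecMul, dotProduct] using congrFun h1L j
    rw [sub_mul, sub_mul, Matrix.one_mul, smul_mul, hJL, smul_zero, sub_zero, hp1, sub_self]
  · have hJ1 : (of fun _ _ => (1 : K) : Matrix ι ι K) *ᵥ 1 = (Fintype.card ι : K) • 1 := by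
      ext
      simp [mulVec, dotProduct]
    rw [sub_mulVec, sub_mulVec, one_mulVec, ← mulVec_mulVec, hLp1, mulVec_zero, sub_zero,
      smul_mulVec, hJ1, inv_smul_smul₀ hn, sub_self]

def groundedInv (Lp : Matrix ι ι K) (s : ι) (k : K) : Matrix ι ι K :=
  of fun i j => Lp i j - Lp i s - Lp s j + (k⁻¹ + Lp s s)

variable {L Lp : Matrix ι ι K} {s : ι} {k : K}

theorem trace_groundedInv (hLp1 : Lp *ᵥ 1 = 0) (h1Lp : 1 ᵥ* Lp = 0) :
    (groundedInv Lp s k).trace =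
      (Fintype.card ι : K) / k + Lp.trace + (Fintype.card ι : K) * Lp s s := by
  have hrow : ∑ j, Lp s j = 0 := by simpa [mulVec, dotProduct] using congrFun hLp1 s
  have hcol : ∑ i, Lp i s = 0 := by simpa [vecMul, dotProduct] using congrFun h1Lp s
  simp only [trace, diag, groundedInv, of_apply, Finset.sum_add_distrib, Finset.sum_sub_distrib,
    hrow, hcol, Finset.sum_const, Finset.card_univ, nsmul_eq_mul]
  ring

variable [DecidableEq ι]

theorem mul_groundedInv (hL1 : L *ᵥ 1 = 0)
    (hproj : L * Lp = 1 - (Fintype.card ι : K)⁻¹ • of fun _ _ => 1) :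
    L * groundedInv Lp s k = 1 - single s s 1 * of fun _ _ => 1 := by
  have hrow : ∀ i, ∑ m, L i m = 0 := fun i => by simpa [mulVec, dotProduct] using congrFun hL1 i
  have hLLp : ∀ i j,
      ∑ m, L i m * Lp m j = (1 : Matrix ι ι K) i j - (Fintype.card ι : K)⁻¹ := by
    intro i j
    simpa [mul_apply] using congrFun (congrFun hproj i) j
  ext i j
  simp only [mul_apply, groundedInv, of_apply, mul_add, mul_sub, Finset.sum_add_distrib,
    Finset.sum_sub_distrib, ← Finset.sum_mul, hLLp, hrow]
  obtain rfl | h := eq_or_ne i s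
  · simp [single_mul_apply_same]
  · simp [single_mul_apply_of_ne (h := h), one_apply_ne h]

theorem smul_single_mul_groundedInv (hk : k ≠ 0) :
    k • single s s 1 * groundedInv Lp s k = single s s 1 * of fun _ _ => 1 := by
  ext i j
  by_cases h : i = s
  · subst h; simp [groundedInv, hk]
  · simp [h]

end Field

end Matrix

theorem stmt_3_general {n : ℕ} (L Lp : Matrix (Fin n) (Fin n) ℝ)
    (hL : L.PosSemidef) (hL1 : L *ᵥ (fun _ => (1 : ℝ)) = 0) (hrank : L.rank = n - 1)
    (hp1 : L * Lp * L = L) (hp2 : Lp * L * Lp = Lp)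
    (hp3 : (L * Lp)ᵀ = L * Lp) (hp4 : (Lp * L)ᵀ = Lp * L)
    (s : Fin n) (k : ℝ) (hk : 0 < k) :
    IsUnit (L + k • Matrix.single s s (1 : ℝ)) ∧
    ((L + k • Matrix.single s s (1 : ℝ))⁻¹).trace =
      (n : ℝ) / k + Lp.trace + (n : ℝ) * Lp s s := by
  have : Nonempty (Fin n) := ⟨s⟩
  have h1L : 1 ᵥ* L = 0 := by
    rw [← mulVec_transpose, (isHermitian_iff_isSymm.mp hL.isHermitian).eq, ← hL1]
    rfl
  have hLp1 := mulVec_eq_zero_of_vecMul_eq_zero hp2 hp3 h1L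
  have h1Lp := vecMul_eq_zero_of_mulVec_eq_zero (v := 1) hp2 hp4 hL1
  have hproj := mul_eq_one_sub_card_inv_smul_of_rank h1L (by simpa using hrank) hp1 hLp1
  have hinv : (L + k • single s s 1) * groundedInv Lp s k = 1 := by
    rw [add_mul, mul_groundedInv hL1 hproj, smul_single_mul_groundedInv hk.ne', sub_add_cancel]
  refine ⟨IsUnit.of_mul_eq_one _ hinv, ?_⟩
  rw [inv_eq_right_inv hinv, trace_groundedInv hLp1 h1Lp, Fintype.card_fin]

/-- For the Laplacian `L` of a connected undirected weighted graph with
Moore–Penrose pseudoinverse `Lp`, a single leader node `s` and gain `k > 0`, the matrix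
`L + k E_{ss}` is invertible and
`tr((L + k E_{ss})⁻¹) = n/k + tr(L⁺) + n L⁺_{s,s}`. -/
theorem stmt_3 {n : ℕ} (hn : 1 ≤ n) (L Lp : Matrix (Fin n) (Fin n) ℝ)
    (hL : L.PosSemidef) (hL1 : L *ᵥ (fun _ => (1 : ℝ)) = 0) (hrank : L.rank = n - 1)
    (hp1 : L * Lp * L = L) (hp2 : Lp * L * Lp = Lp)
    (hp3 : (L * Lp)ᵀ = L * Lp) (hp4 : (Lp * L)ᵀ = Lp * L)
    (s : Fin n) (k : ℝ) (hk : 0 < k) :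
    IsUnit (L + k • Matrix.single s s (1 : ℝ)) ∧
    ((L + k • Matrix.single s s (1 : ℝ))⁻¹).trace =
      (n : ℝ) / k + Lp.trace + (n : ℝ) * Lp s s :=
  stmt_3_general L Lp hL hL1 hrank hp1 hp2 hp3 hp4 s k hk
end

section
/- Let n ≥ 1, let L ∈ ℝ^{n×n} be a symmetric positive semidefinite matrix with L·1 = 0 and rank n − 1, and let L⁺ be its Moore–Penrose pseudoinverse. Fix a node s ∈ {1,…,n}. Then, as k → ∞, tr((L + k·E_{s,s})⁻¹) converges to tr(L⁺) + n·L⁺_{s,s}. (Hence the total system error with one noise-free leader s equals (σ²/2)(tr(L⁺) + n·L⁺_{s,s}) = (nσ²/2)(1/c_s).) -/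
/-!
Write `J = 𝟙𝟙ᵀ` and `E = E_{s,s}`. The Penrose equations make `L L⁺` and `L⁺ L` symmetric
idempotents of rank `n - 1` that kill `𝟙`, so both equal the centering matrix `I - J / n`; in
particular `L⁺ J = J L⁺ = 0`. For `k ≠ 0` one checks directly, using `L J = 0`, `J E J = J` and
`E L⁺ E = L⁺ₛₛ E`, that
  `(L + k E)⁻¹ = L⁺ - L⁺ E J - J E L⁺ + (L⁺ₛₛ + 1 / k) J`,
whose trace is `tr L⁺ + n (L⁺ₛₛ + 1 / k) → tr L⁺ + n L⁺ₛₛ`.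
-/

open Matrix Filter

namespace Matrix

section Rank

variable {m n R : Type*} [Fintype m] [Fintype n] [CommRing R] [StrongRankCondition R]
  {A : Matrix m n R} {X : Matrix n m R}

theorem rank_mul_eq_of_mul_mul_eq (h : A * X * A = A) : (A * X).rank = A.rank := by
  refine le_antisymm (rank_mul_le_left _ _) ?_
  calc A.rank = (A * X * A).rank := by rw [h]
    _ ≤ (A * X).rank := rank_mul_le_left _ _

theorem rank_mul_eq_of_mul_mul_eq' (h : A * X * A = A) : (X * A).rank = A.rank := by
  refine le_antisymm (rank_mul_le_right _ _) ?_
  calc A.rank = (A * (X * A)).rank := by rw [← Matrix.mul_assoc, h]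
    _ ≤ (X * A).rank := rank_mul_le_right _ _

end Rank

variable {ι 𝕜 : Type*} [Field 𝕜]

variable (ι 𝕜) in
def onesMatrix : Matrix ι ι 𝕜 := of 1

@[simp]
theorem onesMatrix_apply (i j : ι) : onesMatrix ι 𝕜 i j = 1 := rfl

variable [Fintype ι]

theorem ker_mulVecLin_eq_span_singleton {A : Matrix ι ι 𝕜} {v : ι → 𝕜} (hv : v ≠ 0)
    (hAv : A *ᵥ v = 0) (hrank : A.rank = Fintype.card ι - 1) :
    LinearMap.ker A.mulVecLin = 𝕜 ∙ v := by
  obtain ⟨i, -⟩ := Function.ne_iff.1 hv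
  have hcard : 0 < Fintype.card ι := Fintype.card_pos_iff.2 ⟨i⟩
  have hdim : Module.finrank 𝕜 (LinearMap.ker A.mulVecLin) = 1 := by
    have := LinearMap.finrank_range_add_finrank_ker A.mulVecLin
    rw [← rank, hrank, Module.finrank_fintype_fun_eq_card] at this
    omega
  refine (Submodule.eq_of_le_of_finrank_le ?_ ?_).symm
  · exact (Submodule.span_singleton_le_iff_mem _ _).2 hAv
  · rw [hdim, finrank_span_singleton hv]

variable (ι 𝕜) in
def centeringMatrix [DecidableEq ι] : Matrix ι ι 𝕜 :=
  1 - (Fintype.card ι : 𝕜)⁻¹ • onesMatrix ι 𝕜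

theorem onesMatrix_mulVec (v : ι → 𝕜) : onesMatrix ι 𝕜 *ᵥ v = (1 ⬝ᵥ v) • 1 := by
  ext i
  simp [mulVec, dotProduct]

theorem mul_onesMatrix_eq_zero {A : Matrix ι ι 𝕜} (h : A *ᵥ 1 = 0) : A * onesMatrix ι 𝕜 = 0 := by
  ext i j
  simpa [mul_apply, mulVec, dotProduct] using congrFun h i

theorem trace_onesMatrix : (onesMatrix ι 𝕜).trace = Fintype.card ι := by
  simp [trace]

theorem onesMatrix_mul_onesMatrix :
    onesMatrix ι 𝕜 * onesMatrix ι 𝕜 = (Fintype.card ι : 𝕜) • onesMatrix ι 𝕜 := by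
  ext i j
  simp [mul_apply]

variable [DecidableEq ι]

theorem onesMatrix_mul_single_mul_onesMatrix (s : ι) :
    onesMatrix ι 𝕜 * single s s 1 * onesMatrix ι 𝕜 = onesMatrix ι 𝕜 := by
  ext i j
  simp [mul_apply, single, ite_and]

theorem centeringMatrix_mul_onesMatrix [Nonempty ι] [CharZero 𝕜] :
    centeringMatrix ι 𝕜 * onesMatrix ι 𝕜 = 0 := by
  simp [centeringMatrix, Matrix.sub_mul, onesMatrix_mul_onesMatrix, smul_smul]

theorem onesMatrix_mul_centeringMatrix [Nonempty ι] [CharZero 𝕜] :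
    onesMatrix ι 𝕜 * centeringMatrix ι 𝕜 = 0 := by
  simp [centeringMatrix, Matrix.mul_sub, onesMatrix_mul_onesMatrix, smul_smul]

theorem eq_centeringMatrix [Nonempty ι] [CharZero 𝕜] {Q : Matrix ι ι 𝕜} (hsymm : Qᵀ = Q)
    (hidem : Q * Q = Q) (hQ1 : Q *ᵥ 1 = 0) (hrank : Q.rank = Fintype.card ι - 1) :
    Q = centeringMatrix ι 𝕜 := by
  have hker := ker_mulVecLin_eq_span_singleton one_ne_zero hQ1 hrank
  refine ext_iff_mulVec.2 fun v => ?_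
  obtain ⟨t, ht⟩ : ∃ t : 𝕜, t • 1 = v - Q *ᵥ v := by
    rw [← Submodule.mem_span_singleton, ← hker, LinearMap.mem_ker, mulVecLin_apply, mulVec_sub,
      mulVec_mulVec, hidem, sub_self]
  have hsum : 1 ⬝ᵥ (Q *ᵥ v) = 0 := by
    rw [dotProduct_mulVec, ← mulVec_transpose, hsymm, hQ1, zero_dotProduct]
  have ht' : t = (Fintype.card ι : 𝕜)⁻¹ * (1 ⬝ᵥ v) := by
    have := congrArg (1 ⬝ᵥ ·) ht
    simp only [dotProduct_smul, dotProduct_sub, hsum, sub_zero] at this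
    have hcard : (Fintype.card ι : 𝕜) ≠ 0 := Nat.cast_ne_zero.2 Fintype.card_ne_zero
    rw [← this, one_dotProduct_one, smul_eq_mul, mul_comm, mul_inv_cancel_right₀ hcard]
  rw [centeringMatrix, sub_mulVec, one_mulVec, smul_mulVec, onesMatrix_mulVec, smul_smul, ← ht',
    ht, sub_sub_cancel]

theorem single_one_mul_mul_single_one (s : ι) (A : Matrix ι ι 𝕜) :
    single s s 1 * A * single s s 1 = A s s • single s s 1 := by
  rw [single_mul_mul_single, smul_single, one_mul, mul_one, smul_eq_mul, mul_one]

theorem inv_add_smul_single {L Lp : Matrix ι ι 𝕜} (hLJ : L * onesMatrix ι 𝕜 = 0)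
    (hLLp : L * Lp = centeringMatrix ι 𝕜) (s : ι) {k : 𝕜} (hk : k ≠ 0) :
    (L + k • single s s 1)⁻¹ = Lp - Lp * single s s 1 * onesMatrix ι 𝕜
      - onesMatrix ι 𝕜 * single s s 1 * Lp + (Lp s s + k⁻¹) • onesMatrix ι 𝕜 := by
  set J := onesMatrix ι 𝕜
  set E : Matrix ι ι 𝕜 := single s s 1
  set X := Lp - Lp * E * J - J * E * Lp + (Lp s s + k⁻¹) • J
  have hLX : L * X = 1 - E * J := by
    simp only [X, Matrix.mul_add, Matrix.mul_sub, Matrix.mul_smul, ← Matrix.mul_assoc, hLLp, hLJ,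
      centeringMatrix, Matrix.sub_mul, Matrix.smul_mul, Matrix.one_mul, Matrix.zero_mul, smul_zero]
    rw [onesMatrix_mul_single_mul_onesMatrix]
    abel
  have hEX : E * X = k⁻¹ • (E * J) := by
    simp only [X, Matrix.mul_add, Matrix.mul_sub, Matrix.mul_smul, ← Matrix.mul_assoc]
    rw [single_one_mul_mul_single_one, single_one_mul_mul_single_one,
      show J s s = 1 from rfl, one_smul,
      Matrix.smul_mul, add_smul]
    abel
  refine inv_eq_right_inv ?_
  rw [Matrix.add_mul, Matrix.smul_mul, hLX, hEX, smul_smul, mul_inv_cancel₀ hk, one_smul,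
    sub_add_cancel]

theorem trace_inv_add_smul_single {L Lp : Matrix ι ι 𝕜} (hLJ : L * onesMatrix ι 𝕜 = 0)
    (hLLp : L * Lp = centeringMatrix ι 𝕜) (hLpJ : Lp * onesMatrix ι 𝕜 = 0)
    (hJLp : onesMatrix ι 𝕜 * Lp = 0) (s : ι) {k : 𝕜} (hk : k ≠ 0) :
    (L + k • single s s 1)⁻¹.trace = Lp.trace + Fintype.card ι * (Lp s s + k⁻¹) := by
  rw [inv_add_smul_single hLJ hLLp s hk, trace_add, trace_sub, trace_sub, trace_smul,
    trace_mul_cycle Lp, hJLp, trace_mul_cycle (onesMatrix ι 𝕜), hLpJ]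
  simp [trace_onesMatrix, mul_comm]

section Pseudoinverse

variable [Nonempty ι] [CharZero 𝕜] {L Lp : Matrix ι ι 𝕜}

theorem mul_pinv_eq_centeringMatrix (hL1 : L *ᵥ 1 = 0) (hrank : L.rank = Fintype.card ι - 1)
    (hp1 : L * Lp * L = L) (hLsymm : Lᵀ = L) (hp3 : (L * Lp)ᵀ = L * Lp) :
    L * Lp = centeringMatrix ι 𝕜 := by
  refine eq_centeringMatrix hp3 (by rw [← Matrix.mul_assoc, hp1]) ?_
    (by rw [rank_mul_eq_of_mul_mul_eq hp1, hrank])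
  rw [← hp3, transpose_mul, hLsymm, ← mulVec_mulVec, hL1, mulVec_zero]

theorem pinv_mul_eq_centeringMatrix (hL1 : L *ᵥ 1 = 0) (hrank : L.rank = Fintype.card ι - 1)
    (hp1 : L * Lp * L = L) (hp4 : (Lp * L)ᵀ = Lp * L) :
    Lp * L = centeringMatrix ι 𝕜 := by
  refine eq_centeringMatrix hp4 ?_ (by rw [← mulVec_mulVec, hL1, mulVec_zero])
    (by rw [rank_mul_eq_of_mul_mul_eq' hp1, hrank])
  rw [Matrix.mul_assoc, ← Matrix.mul_assoc L, hp1]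

end Pseudoinverse

end Matrix

/-- For the Laplacian `L` of a connected undirected weighted graph with
Moore–Penrose pseudoinverse `Lp` and a node `s`, as `k → ∞`,
`tr((L + k E_{s,s})⁻¹)` converges to `tr(L⁺) + n L⁺_{s,s}`. -/
theorem stmt_5 {n : ℕ} (hn : 1 ≤ n) (L Lp : Matrix (Fin n) (Fin n) ℝ)
    (hL : L.PosSemidef) (hL1 : L *ᵥ (fun _ => (1 : ℝ)) = 0) (hrank : L.rank = n - 1)
    (hp1 : L * Lp * L = L) (hp2 : Lp * L * Lp = Lp)
    (hp3 : (L * Lp)ᵀ = L * Lp) (hp4 : (Lp * L)ᵀ = Lp * L)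
    (s : Fin n) :
    Tendsto (fun k : ℝ => ((L + k • Matrix.single s s (1 : ℝ))⁻¹).trace)
      atTop (nhds (Lp.trace + (n : ℝ) * Lp s s)) := by
  have : Nonempty (Fin n) := ⟨⟨0, hn⟩⟩
  replace hrank : L.rank = Fintype.card (Fin n) - 1 := by rw [Fintype.card_fin, hrank]
  have hLLp := mul_pinv_eq_centeringMatrix hL1 hrank hp1
    (by simpa only [conjTranspose_eq_transpose_of_trivial] using hL.1.eq) hp3
  have hLpL := pinv_mul_eq_centeringMatrix hL1 hrank hp1 hp4
  have hLpJ : Lp * onesMatrix (Fin n) ℝ = 0 := by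
    rw [← hp2, Matrix.mul_assoc Lp, Matrix.mul_assoc, hLLp, centeringMatrix_mul_onesMatrix,
      Matrix.mul_zero]
  have hJLp : onesMatrix (Fin n) ℝ * Lp = 0 := by
    rw [← hp2, ← Matrix.mul_assoc, hLpL, onesMatrix_mul_centeringMatrix, Matrix.zero_mul]
  have htrace : ∀ᶠ k : ℝ in atTop,
      Lp.trace + n * (Lp s s + k⁻¹) = ((L + k • single s s 1)⁻¹).trace :=
    (eventually_ne_atTop 0).mono fun k hk => by
      simpa using (trace_inv_add_smul_single (mul_onesMatrix_eq_zero hL1) hLLp hLpJ hJLp s hk).symm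
  refine Tendsto.congr' htrace ?_
  simpa using ((tendsto_inv_atTop_zero.const_add (Lp s s)).const_mul (n : ℝ)).const_add Lp.trace
end

section
/- Let n ≥ 1, let L ∈ ℝ^{n×n} be a symmetric positive semidefinite matrix with L·1 = 0 and rank n − 1, and let L⁺ be its Moore–Penrose pseudoinverse. Fix two distinct nodes s₁ ≠ s₂, let r = L⁺_{s₁,s₁} + L⁺_{s₂,s₂} − 2L⁺_{s₁,s₂} and γ = (e_{s₁} − e_{s₂})ᵀ(L⁺)²(e_{s₁} − e_{s₂}). Then, as k → ∞, tr((L + k·E_{s₁,s₁} + k·E_{s₂,s₂})⁻¹) converges to tr(L⁺) + [ n(L⁺_{s₁,s₁}L⁺_{s₂,s₂} − (L⁺_{s₁,s₂})²) − γ ] / r. (This is the total system error, up to the factor σ²/2, with two noise-free leaders s₁ and s₂.) -/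
/-!
Write `Π = n⁻¹ 𝟙𝟙ᵀ`. Since `L` is symmetric with kernel spanned by `𝟙`, `L L⁺ = I - Π`, so
`L + Π` is invertible with inverse `L⁺ + Π`. If `F` is the `3 × n` matrix with rows `e_{s₁}`,
`e_{s₂}`, `𝟙`, then `L + k E_{s₁s₁} + k E_{s₂s₂} = (L + Π) + Fᵀ diag(k, k, -1/n) F`, and the
Woodbury identity expresses the trace of its inverse through `tr (L⁺ + Π)` and the `3 × 3` Gram
matrices `F (L⁺ + Π) Fᵀ` and `F (L⁺ + Π)² Fᵀ`. As `k → ∞` the capacitance matrix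
`diag(k, k, -1/n)⁻¹ + F (L⁺ + Π) Fᵀ` tends to a matrix of determinant `-r`, invertible because the
resistance distance `r = (e_{s₁} - e_{s₂})ᵀ L⁺ (e_{s₁} - e_{s₂})` is positive, and the limit is an
explicit `3 × 3` computation.
-/

open Matrix Filter Topology

namespace Matrix

section MoorePenrose

variable {m n R : Type*} [Fintype m] [Fintype n] [CommRing R]

structure IsMoorePenroseInverse (A : Matrix m n R) (X : Matrix n m R) : Prop where
  mul_mul_self : A * X * A = A
  inv_mul_inv : X * A * X = X
  transpose_mul : (A * X)ᵀ = A * X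
  transpose_inv_mul : (X * A)ᵀ = X * A

namespace IsMoorePenroseInverse

variable {A : Matrix m n R} {X Y : Matrix n m R}

theorem transpose (h : IsMoorePenroseInverse A X) : IsMoorePenroseInverse Aᵀ Xᵀ where
  mul_mul_self := by
    simpa only [Matrix.transpose_mul, Matrix.mul_assoc] using congrArg Matrix.transpose h.1
  inv_mul_inv := by
    simpa only [Matrix.transpose_mul, Matrix.mul_assoc] using congrArg Matrix.transpose h.2
  transpose_mul := by rw [← Matrix.transpose_mul, h.transpose_inv_mul, h.transpose_inv_mul]
  transpose_inv_mul := by rw [← Matrix.transpose_mul, h.transpose_mul, h.transpose_mul]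

/-- Both `X` and `Y` equal `X * A * Y`. -/
theorem unique (hX : IsMoorePenroseInverse A X) (hY : IsMoorePenroseInverse A Y) : X = Y := by
  have hAX : A * X = A * Y := by
    calc A * X = (A * Y * A * X)ᵀ := by rw [hY.mul_mul_self, hX.transpose_mul]
      _ = (A * X)ᵀ * (A * Y)ᵀ := by simp only [Matrix.mul_assoc, Matrix.transpose_mul]
      _ = A * Y := by
          rw [hX.transpose_mul, hY.transpose_mul, ← Matrix.mul_assoc, hX.mul_mul_self]
  have hXA : X * A = Y * A := by
    calc X * A = (X * A * Y * A)ᵀ := by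
          rw [show X * A * Y * A = X * (A * Y * A) by simp only [Matrix.mul_assoc],
            hY.mul_mul_self, hX.transpose_inv_mul]
      _ = (Y * A)ᵀ * (X * A)ᵀ := by simp only [Matrix.mul_assoc, Matrix.transpose_mul]
      _ = Y * A := by
          rw [hX.transpose_inv_mul, hY.transpose_inv_mul, Matrix.mul_assoc,
            ← Matrix.mul_assoc A, hX.mul_mul_self]
  calc X = X * A * X := hX.inv_mul_inv.symm
    _ = Y * A * Y := by rw [hXA, Matrix.mul_assoc, hAX, ← Matrix.mul_assoc]
    _ = Y := hY.inv_mul_inv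

theorem isSymm {A X : Matrix n n R} (h : IsMoorePenroseInverse A X) (hA : A.IsSymm) :
    X.IsSymm :=
  (hA.eq ▸ h.transpose).unique h

theorem mul_mulVec_eq_zero (hX : IsMoorePenroseInverse A X) {v : m → R} (hv : v ᵥ* A = 0) :
    (A * X) *ᵥ v = 0 := by
  rw [← hX.transpose_mul, mulVec_transpose, ← vecMul_vecMul, hv, zero_vecMul]

theorem mulVec_eq_zero (hX : IsMoorePenroseInverse A X) {v : m → R} (hv : v ᵥ* A = 0) :
    X *ᵥ v = 0 := by
  rw [← hX.inv_mul_inv, Matrix.mul_assoc, ← mulVec_mulVec, hX.mul_mulVec_eq_zero hv,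
    mulVec_zero]

end IsMoorePenroseInverse

end MoorePenrose

section Averaging

variable {ι K : Type*} [Fintype ι] [Field K]

variable (ι K) in
def averaging : Matrix ι ι K := (Fintype.card ι : K)⁻¹ • vecMulVec 1 1

@[simp]
theorem averaging_apply (i j : ι) : averaging ι K i j = (Fintype.card ι : K)⁻¹ := by
  simp [averaging]

theorem averaging_mul {L : Matrix ι ι K} (h1L : 1 ᵥ* L = 0) : averaging ι K * L = 0 := by
  rw [averaging, smul_mul, vecMulVec_mul, h1L, vecMulVec_zero, smul_zero]

theorem mul_averaging {L : Matrix ι ι K} (hL1 : L *ᵥ 1 = 0) : L * averaging ι K = 0 := by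
  rw [averaging, Matrix.mul_smul, mul_vecMulVec, hL1, zero_vecMulVec, smul_zero]

theorem averaging_mulVec_eq_zero {v : ι → K} (hv : 1 ⬝ᵥ v = 0) : averaging ι K *ᵥ v = 0 := by
  rw [averaging, smul_mulVec, vecMulVec_mulVec, hv]
  simp

variable [CharZero K] [Nonempty ι]

theorem averaging_mulVec_one : averaging ι K *ᵥ 1 = 1 := by
  ext i
  simp [mulVec, dotProduct]

theorem one_vecMul_averaging : 1 ᵥ* averaging ι K = 1 := by
  ext i
  simp [vecMul, dotProduct]

theorem trace_averaging : trace (averaging ι K) = 1 := by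
  simp [trace]

theorem averaging_mul_averaging : averaging ι K * averaging ι K = averaging ι K := by
  ext i j
  simp [mul_apply]

theorem add_averaging_mul_add_averaging {B C : Matrix ι ι K} (hB1 : B *ᵥ 1 = 0)
    (h1C : 1 ᵥ* C = 0) :
    (B + averaging ι K) * (C + averaging ι K) = B * C + averaging ι K := by
  rw [add_mul, mul_add, mul_add, mul_averaging hB1, averaging_mul h1C, averaging_mul_averaging,
    add_zero, zero_add]

end Averaging

section Laplacian

variable {ι K : Type*} [Fintype ι] [Field K] [CharZero K] [Nonempty ι]

theorem range_mulVecLin_sup_span_one_eq_top {L : Matrix ι ι K} (h1L : 1 ᵥ* L = 0)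
    (hrank : L.rank = Fintype.card ι - 1) :
    LinearMap.range L.mulVecLin ⊔ K ∙ (1 : ι → K) = ⊤ := by
  have hcard : (Fintype.card ι : K) ≠ 0 := Nat.cast_ne_zero.mpr Fintype.card_ne_zero
  have hdisj : LinearMap.range L.mulVecLin ⊓ K ∙ (1 : ι → K) = ⊥ := by
    refine (Submodule.eq_bot_iff _).mpr ?_
    rintro x ⟨⟨y, rfl⟩, hx⟩
    obtain ⟨t, ht⟩ := Submodule.mem_span_singleton.mp hx
    rw [mulVecLin_apply] at ht ⊢
    have h1x : (1 : ι → K) ⬝ᵥ L *ᵥ y = 0 := by rw [dotProduct_mulVec, h1L, zero_dotProduct]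
    rw [← ht, dotProduct_smul, one_dotProduct_one, smul_eq_mul, mul_eq_zero,
      or_iff_left hcard] at h1x
    rw [← ht, h1x, zero_smul]
  apply Submodule.eq_top_of_finrank_eq
  have h := Submodule.finrank_sup_add_finrank_inf_eq (LinearMap.range L.mulVecLin) (K ∙ 1)
  rw [hdisj, finrank_bot, add_zero, finrank_span_singleton one_ne_zero] at h
  rw [h, ← Matrix.rank, hrank, Module.finrank_fintype_fun_eq_card]
  have := Fintype.card_pos (α := ι)
  omega

theorem eq_zero_of_mul_eq_zero_of_mulVec_one_eq_zero [DecidableEq ι] {L B : Matrix ι ι K}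
    (h1L : 1 ᵥ* L = 0) (hrank : L.rank = Fintype.card ι - 1) (hBL : B * L = 0)
    (hB1 : B *ᵥ 1 = 0) : B = 0 := by
  have hker : LinearMap.ker B.mulVecLin = ⊤ := by
    rw [eq_top_iff, ← range_mulVecLin_sup_span_one_eq_top h1L hrank]
    refine sup_le ?_ ((Submodule.span_singleton_le_iff_mem _ _).mpr hB1)
    rintro _ ⟨y, rfl⟩
    rw [LinearMap.mem_ker, mulVecLin_apply, mulVecLin_apply, mulVec_mulVec, hBL, zero_mulVec]
  refine ext_of_mulVec_single fun j => ?_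
  rw [zero_mulVec]
  exact LinearMap.congr_fun (LinearMap.ker_eq_top.mp hker) (Pi.single j 1)

theorem IsMoorePenroseInverse.mul_eq_one_sub_averaging [DecidableEq ι] {L X : Matrix ι ι K}
    (hX : IsMoorePenroseInverse L X) (hL : L.IsSymm) (hL1 : L *ᵥ 1 = 0)
    (hrank : L.rank = Fintype.card ι - 1) : L * X = 1 - averaging ι K := by
  have h1L : 1 ᵥ* L = 0 := by rw [← hL.eq, vecMul_transpose, hL1]
  rw [← sub_eq_zero]
  apply eq_zero_of_mul_eq_zero_of_mulVec_one_eq_zero h1L hrank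
  · rw [sub_mul, hX.mul_mul_self, sub_mul, one_mul, averaging_mul h1L, sub_zero, sub_self]
  · rw [sub_mulVec, hX.mul_mulVec_eq_zero h1L, sub_mulVec, one_mulVec, averaging_mulVec_one,
      sub_self, sub_self]

end Laplacian

theorem IsMoorePenroseInverse.dotProduct_mulVec_pos {ι : Type*} [Fintype ι] [DecidableEq ι]
    {L X : Matrix ι ι ℝ}
    (hX : IsMoorePenroseInverse L X) (hL : L.PosSemidef) (hLX : L * X = 1 - averaging ι ℝ)
    {v : ι → ℝ} (hv : v ≠ 0) (h1v : 1 ⬝ᵥ v = 0) : 0 < v ⬝ᵥ X *ᵥ v := by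
  have hXs : X.IsSymm := hX.isSymm (isHermitian_iff_isSymm.mp hL.isHermitian)
  have hquad : v ⬝ᵥ X *ᵥ v = (X *ᵥ v) ⬝ᵥ L *ᵥ (X *ᵥ v) := by
    calc v ⬝ᵥ X *ᵥ v = v ⬝ᵥ (X * L * X) *ᵥ v := by rw [hX.inv_mul_inv]
      _ = (v ᵥ* X) ⬝ᵥ L *ᵥ (X *ᵥ v) := by
          rw [← mulVec_mulVec, ← mulVec_mulVec, dotProduct_mulVec]
      _ = (X *ᵥ v) ⬝ᵥ L *ᵥ (X *ᵥ v) := by rw [← mulVec_transpose, hXs.eq]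
  refine lt_of_le_of_ne (by simpa [hquad] using hL.dotProduct_mulVec_nonneg (X *ᵥ v))
    fun h0 => hv ?_
  have hLXv : L *ᵥ (X *ᵥ v) = 0 :=
    (hL.dotProduct_mulVec_zero_iff _).mp (by simpa [hquad] using h0.symm)
  rwa [mulVec_mulVec, hLX, sub_mulVec, one_mulVec, averaging_mulVec_eq_zero h1v,
    sub_zero] at hLXv

theorem single_sub_single_dotProduct_mulVec {ι R : Type*} [Fintype ι] [DecidableEq ι]
    [CommRing R] {B : Matrix ι ι R} (hB : B.IsSymm) (s t : ι) :
    (Pi.single s 1 - Pi.single t 1) ⬝ᵥ B *ᵥ (Pi.single s 1 - Pi.single t 1) =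
      B s s + B t t - 2 * B s t := by
  simp only [mulVec_sub, mulVec_single_one, sub_dotProduct, dotProduct_sub, single_dotProduct,
    col_apply, one_mul, hB.apply s t]
  ring

theorem IsMoorePenroseInverse.resistance_pos {ι : Type*} [Fintype ι] [DecidableEq ι]
    {L X : Matrix ι ι ℝ} (hX : IsMoorePenroseInverse L X) (hL : L.PosSemidef)
    (hLX : L * X = 1 - averaging ι ℝ) {s t : ι} (hst : s ≠ t) : 0 < X s s + X t t - 2 * X s t := by
  rw [← single_sub_single_dotProduct_mulVec (hX.isSymm (isHermitian_iff_isSymm.mp hL.isHermitian))]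
  refine hX.dotProduct_mulVec_pos hL hLX (fun h => ?_) (by simp)
  simpa [hst] using congrFun h s

section LeaderFrame

variable {ι K : Type*} [Fintype ι] [DecidableEq ι] [Field K]

variable (K) in
def leaderFrame (s t : ι) : Matrix (Fin 3) ι K := ![Pi.single s 1, Pi.single t 1, 1]

theorem transpose_leaderFrame_mul_diagonal_mul (s t : ι) (k : K) :
    (leaderFrame K s t)ᵀ * diagonal ![k, k, -(Fintype.card ι : K)⁻¹] * leaderFrame K s t =
      k • single s s 1 + k • single t t 1 - averaging ι K := by
  ext i j
  have hsingle (u : ι) :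
      single u u k i j = (Pi.single u 1 : ι → K) i * k * (Pi.single u 1 : ι → K) j := by
    by_cases hi : i = u <;> by_cases hj : j = u <;> simp [hi, hj, eq_comm]
  simp only [transpose_apply, mul_apply, Fin.sum_univ_three]
  simp [leaderFrame, hsingle]
  ring

theorem leaderFrame_mul_add_averaging_mul_transpose [CharZero K] [Nonempty ι]
    {B : Matrix ι ι K} (hB1 : B *ᵥ 1 = 0) (h1B : 1 ᵥ* B = 0) (s t : ι) :
    leaderFrame K s t * (B + averaging ι K) * (leaderFrame K s t)ᵀ =
      !![B s s + (Fintype.card ι : K)⁻¹, B s t + (Fintype.card ι : K)⁻¹, 1;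
        B t s + (Fintype.card ι : K)⁻¹, B t t + (Fintype.card ι : K)⁻¹, 1;
        1, 1, Fintype.card ι] := by
  have hM1 : (B + averaging ι K) *ᵥ 1 = 1 := by
    rw [add_mulVec, hB1, averaging_mulVec_one, zero_add]
  have h1M : 1 ᵥ* (B + averaging ι K) = 1 := by
    rw [vecMul_add, h1B, one_vecMul_averaging, zero_add]
  have h1col (j : ι) : 1 ⬝ᵥ (B + averaging ι K).col j = 1 := congrFun h1M j
  have hentry (u v : Fin 3) :
      (leaderFrame K s t * (B + averaging ι K) * (leaderFrame K s t)ᵀ) u v =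
        leaderFrame K s t u ⬝ᵥ (B + averaging ι K) *ᵥ leaderFrame K s t v := by
    rw [dotProduct_mulVec]
    rfl
  ext u v
  rw [hentry]
  fin_cases u <;> fin_cases v <;> simp [leaderFrame, hM1, h1col, one_dotProduct_one]

end LeaderFrame

section Woodbury

variable {m n 𝕜 : Type*} [Fintype m] [DecidableEq m] [Fintype n] [DecidableEq n]

theorem tendsto_trace_inv_add_mul_mul [NormedField 𝕜] {α : Type*} {l : Filter α}
    {A : Matrix n n 𝕜} (hA : IsUnit A) (U : Matrix n m 𝕜) (V : Matrix m n 𝕜)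
    {C : α → Matrix m m 𝕜} {C' : Matrix m m 𝕜} (hC : ∀ᶠ a in l, IsUnit (C a))
    (hCinv : Tendsto (fun a => (C a)⁻¹) l (𝓝 C')) (hS : IsUnit (C' + V * A⁻¹ * U)) :
    Tendsto (fun a => trace (A + U * C a * V)⁻¹) l
      (𝓝 (trace A⁻¹ - trace (V * A⁻¹ * A⁻¹ * U * (C' + V * A⁻¹ * U)⁻¹))) := by
  set S := fun a => (C a)⁻¹ + V * A⁻¹ * U
  have hdetS := ((isUnit_iff_isUnit_det _).mp hS).ne_zero
  have hSlim : Tendsto S l (𝓝 (C' + V * A⁻¹ * U)) := hCinv.add_const _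
  have hSunit : ∀ᶠ a in l, IsUnit (S a) := by
    have hdet := (continuous_id.matrix_det.tendsto _).comp hSlim
    filter_upwards [hdet.eventually_ne hdetS] with a ha
    exact (isUnit_iff_isUnit_det _).mpr (isUnit_iff_ne_zero.mpr ha)
  have hSinv : Tendsto (fun a => (S a)⁻¹) l (𝓝 (C' + V * A⁻¹ * U)⁻¹) := by
    refine (continuousAt_matrix_inv _ ?_).tendsto.comp hSlim
    rw [Ring.inverse_eq_inv']
    exact continuousAt_inv₀ hdetS
  have hwoodbury : ∀ᶠ a in l, trace (A + U * C a * V)⁻¹ =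
      trace A⁻¹ - trace (V * A⁻¹ * A⁻¹ * U * (S a)⁻¹) := by
    filter_upwards [hC, hSunit] with a hCa hSa
    rw [add_mul_mul_inv_eq_sub A U (C a) V hA hCa hSa, trace_sub, ← trace_mul_cycle]
    simp only [Matrix.mul_assoc, S]
  refine (tendsto_const_nhds.sub ?_).congr' (hwoodbury.mono fun a h => h.symm)
  exact ((continuous_const.matrix_mul continuous_id).matrix_trace.tendsto _).comp hSinv

theorem tendsto_inv_diagonal_atTop {c : ℝ} (hc : c ≠ 0) :
    Tendsto (fun k : ℝ => (diagonal ![k, k, c])⁻¹) atTop (𝓝 (diagonal ![0, 0, c⁻¹])) := by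
  have hinv : ∀ᶠ k in atTop, diagonal ![k⁻¹, k⁻¹, c⁻¹] = (diagonal ![k, k, c])⁻¹ := by
    filter_upwards [eventually_ne_atTop 0] with k hk
    refine (inv_eq_right_inv ?_).symm
    rw [diagonal_mul_diagonal, ← diagonal_one]
    congr 1
    ext i
    fin_cases i <;> simp [hk, hc]
  have hvec : Tendsto (fun k : ℝ => ![k⁻¹, k⁻¹, c⁻¹]) atTop (𝓝 ![0, 0, c⁻¹]) :=
    tendsto_pi_nhds.mpr fun i => by fin_cases i <;> simp [tendsto_inv_atTop_zero]
  exact ((continuous_id.matrix_diagonal.tendsto _).comp hvec).congr' hinv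

theorem tendsto_trace_inv_add_transpose_mul_diagonal_mul {A : Matrix n n ℝ} (hA : IsUnit A)
    (F : Matrix (Fin 3) n ℝ) {c : ℝ} (hc : c ≠ 0)
    (hS : IsUnit (diagonal ![0, 0, c⁻¹] + F * A⁻¹ * Fᵀ)) :
    Tendsto (fun k : ℝ => trace (A + Fᵀ * diagonal ![k, k, c] * F)⁻¹) atTop
      (𝓝 (trace A⁻¹ -
        trace (F * A⁻¹ * A⁻¹ * Fᵀ * (diagonal ![0, 0, c⁻¹] + F * A⁻¹ * Fᵀ)⁻¹))) := by
  refine tendsto_trace_inv_add_mul_mul hA Fᵀ F ?_ (tendsto_inv_diagonal_atTop hc) hS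
  filter_upwards [eventually_ne_atTop 0] with k hk
  rw [isUnit_diagonal, Pi.isUnit_iff]
  intro i
  fin_cases i <;> simp [hk, hc]

end Woodbury

theorem det_bordered_fin_three {K : Type*} [Field K] (a b e c : K) :
    det !![a + c, e + c, 1; e + c, b + c, 1; 1, 1, 0] = -(a + b - 2 * e) := by
  rw [det_fin_three]
  simp
  ring

theorem trace_mul_inv_bordered_fin_three {K : Type*} [Field K] {a b e g₁₁ g₁₂ g₂₂ c ν : K}
    (hcν : c * ν = 1) (hr : a + b - 2 * e ≠ 0) :
    trace (!![g₁₁ + c, g₁₂ + c, 1; g₁₂ + c, g₂₂ + c, 1; 1, 1, ν] *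
        (!![a + c, e + c, 1; e + c, b + c, 1; 1, 1, 0])⁻¹) =
      1 - (ν * (a * b - e ^ 2) - (g₁₁ + g₂₂ - 2 * g₁₂)) / (a + b - 2 * e) := by
  rw [inv_def, det_bordered_fin_three, Ring.inverse_eq_inv', Matrix.mul_smul, trace_smul,
    smul_eq_mul, adjugate_fin_three, trace_fin_three]
  simp [mul_apply, Fin.sum_univ_three]
  have hr' : 2 * e - (a + b) ≠ 0 := fun h => hr (by linear_combination -h)
  field_simp
  linear_combination (a + b - 2 * e) ^ 2 * hcν

theorem IsMoorePenroseInverse.tendsto_trace_inv_add_smul_single_add_smul_single {ι : Type*}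
    [Fintype ι] [DecidableEq ι] [Nonempty ι] {L X : Matrix ι ι ℝ}
    (hX : IsMoorePenroseInverse L X) (hL : L.PosSemidef) (hL1 : L *ᵥ 1 = 0)
    (hrank : L.rank = Fintype.card ι - 1) {s t : ι} (hst : s ≠ t) :
    Tendsto (fun k : ℝ => trace (L + k • single s s 1 + k • single t t 1)⁻¹) atTop
      (𝓝 (trace X + (Fintype.card ι * (X s s * X t t - X s t ^ 2) -
        (Pi.single s 1 - Pi.single t 1) ⬝ᵥ (X * X) *ᵥ (Pi.single s 1 - Pi.single t 1)) /
          (X s s + X t t - 2 * X s t))) := by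
  have hLs : L.IsSymm := isHermitian_iff_isSymm.mp hL.isHermitian
  have hXs : X.IsSymm := hX.isSymm hLs
  have hXXs : (X * X).IsSymm := by rw [← sq]; exact hXs.pow 2
  have hX1 : X *ᵥ 1 = 0 := hX.mulVec_eq_zero (by rw [← hLs.eq, vecMul_transpose, hL1])
  have h1X : 1 ᵥ* X = 0 := by rw [← hXs.eq, vecMul_transpose, hX1]
  have hXX1 : (X * X) *ᵥ 1 = 0 := by rw [← mulVec_mulVec, hX1, mulVec_zero]
  have h1XX : 1 ᵥ* (X * X) = 0 := by rw [← vecMul_vecMul, h1X, zero_vecMul]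
  have hLX := hX.mul_eq_one_sub_averaging hLs hL1 hrank
  have hA : (L + averaging ι ℝ) * (X + averaging ι ℝ) = 1 := by
    rw [add_averaging_mul_add_averaging hL1 h1X, hLX, sub_add_cancel]
  have hr := hX.resistance_pos hL hLX hst
  set c : ℝ := (Fintype.card ι : ℝ)⁻¹
  have hcard : (Fintype.card ι : ℝ) ≠ 0 := Nat.cast_ne_zero.mpr Fintype.card_ne_zero
  have hS : diagonal ![0, 0, (-c)⁻¹] +
      leaderFrame ℝ s t * (L + averaging ι ℝ)⁻¹ * (leaderFrame ℝ s t)ᵀ =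
        !![X s s + c, X s t + c, 1; X s t + c, X t t + c, 1; 1, 1, 0] := by
    rw [inv_eq_right_inv hA, leaderFrame_mul_add_averaging_mul_transpose hX1 h1X]
    ext u v
    fin_cases u <;> fin_cases v <;> simp [c, hXs.apply s t]
  have hlim := tendsto_trace_inv_add_transpose_mul_diagonal_mul
    ((isUnit_iff_isUnit_det _).mpr (isUnit_det_of_right_inverse hA)) (leaderFrame ℝ s t)
    (neg_ne_zero.mpr (inv_ne_zero hcard)) (by
      rw [hS, isUnit_iff_isUnit_det, det_bordered_fin_three, isUnit_iff_ne_zero, neg_ne_zero]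
      exact hr.ne')
  have hM (k : ℝ) : L + k • single s s 1 + k • single t t 1 =
      L + averaging ι ℝ + (leaderFrame ℝ s t)ᵀ * diagonal ![k, k, -c] * leaderFrame ℝ s t := by
    rw [transpose_leaderFrame_mul_diagonal_mul]
    abel
  simp_rw [hM]
  convert hlim using 2
  rw [hS, Matrix.mul_assoc (leaderFrame ℝ s t), inv_eq_right_inv hA,
    add_averaging_mul_add_averaging hX1 h1X, leaderFrame_mul_add_averaging_mul_transpose hXX1 h1XX,
    trace_add, trace_averaging, hXXs.apply s t,
    trace_mul_inv_bordered_fin_three (inv_mul_cancel₀ hcard) hr.ne',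
    single_sub_single_dotProduct_mulVec hXXs]
  ring

end Matrix

theorem stmt_7_general {n : ℕ} (L Lp : Matrix (Fin n) (Fin n) ℝ)
    (hL : L.PosSemidef) (hL1 : L *ᵥ (fun _ => (1 : ℝ)) = 0) (hrank : L.rank = n - 1)
    (hp1 : L * Lp * L = L) (hp2 : Lp * L * Lp = Lp)
    (hp3 : (L * Lp)ᵀ = L * Lp) (hp4 : (Lp * L)ᵀ = Lp * L)
    (s₁ s₂ : Fin n) (hs : s₁ ≠ s₂)
    (r γ : ℝ)
    (hr : r = Lp s₁ s₁ + Lp s₂ s₂ - 2 * Lp s₁ s₂)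
    (hγ : γ = (Pi.single s₁ 1 - Pi.single s₂ 1) ⬝ᵥ
      ((Lp * Lp) *ᵥ (Pi.single s₁ 1 - Pi.single s₂ 1))) :
    Tendsto (fun k : ℝ =>
        ((L + k • Matrix.single s₁ s₁ (1 : ℝ)
          + k • Matrix.single s₂ s₂ (1 : ℝ))⁻¹).trace)
      atTop
      (nhds (Lp.trace +
        ((n : ℝ) * (Lp s₁ s₁ * Lp s₂ s₂ - (Lp s₁ s₂) ^ 2) - γ) / r)) := by
  have : Nonempty (Fin n) := ⟨s₁⟩
  subst hr hγ
  simpa using IsMoorePenroseInverse.tendsto_trace_inv_add_smul_single_add_smul_single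
    ⟨hp1, hp2, hp3, hp4⟩ hL hL1 (by rwa [Fintype.card_fin]) hs

/-- Two noise-free leaders. For the Laplacian `L` of a connected undirected
weighted graph with Moore–Penrose pseudoinverse `Lp`, distinct nodes `s₁ ≠ s₂`, with `r` the
resistance distance and `γ` the biharmonic distance squared between them, as `k → ∞`,
`tr((L + kE_{s₁s₁} + kE_{s₂s₂})⁻¹)` converges to
`tr L⁺ + (n(L⁺₁₁L⁺₂₂ − (L⁺₁₂)²) − γ)/r`. -/
theorem stmt_7 {n : ℕ} (hn : 1 ≤ n) (L Lp : Matrix (Fin n) (Fin n) ℝ)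
    (hL : L.PosSemidef) (hL1 : L *ᵥ (fun _ => (1 : ℝ)) = 0) (hrank : L.rank = n - 1)
    (hp1 : L * Lp * L = L) (hp2 : Lp * L * Lp = Lp)
    (hp3 : (L * Lp)ᵀ = L * Lp) (hp4 : (Lp * L)ᵀ = Lp * L)
    (s₁ s₂ : Fin n) (hs : s₁ ≠ s₂)
    (r γ : ℝ)
    (hr : r = Lp s₁ s₁ + Lp s₂ s₂ - 2 * Lp s₁ s₂)
    (hγ : γ = (Pi.single s₁ 1 - Pi.single s₂ 1) ⬝ᵥ
      ((Lp * Lp) *ᵥ (Pi.single s₁ 1 - Pi.single s₂ 1))) :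
    Tendsto (fun k : ℝ =>
        ((L + k • Matrix.single s₁ s₁ (1 : ℝ)
          + k • Matrix.single s₂ s₂ (1 : ℝ))⁻¹).trace)
      atTop
      (nhds (Lp.trace +
        ((n : ℝ) * (Lp s₁ s₁ * Lp s₂ s₂ - (Lp s₁ s₂) ^ 2) - γ) / r)) :=
  stmt_7_general L Lp hL hL1 hrank hp1 hp2 hp3 hp4 s₁ s₂ hs r γ hr hγ
end

section
/- Let n ≥ 3 be an integer. For vertices of the n-cycle identified with ℤ/nℤ, let d(i,j) = min((i−j) mod n, (j−i) mod n) denote the geodesic distance, and define r(i,j) = d(i,j)(n − d(i,j))/n ∈ ℚ (the resistance distance on the cycle). Then for any two vertices a, b with d = d(a,b), Σ_{i ∈ ℤ/nℤ} ( r(i,a) − r(i,b) )² = d(n − d)( d(n − d) + 2 ) / (3n). -/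
/-!
Both resistances only depend on the difference of the vertices, so after translating `b` to `0`
the sum becomes `∑ⱼ (ρ(j - c) - ρ(j))²` with `c = a - b` and `ρ(u) = u(n - u)/n`. Writing
`k = c.val`, the difference `ρ(j - c) - ρ(j)` is affine in `j` on each of the two arcs
`0 ≤ j < k` and `k ≤ j < n`, equal to `(n - k)(k - 2j)/n` and `-k((n - k) - 2(j - k))/n`, so the
sum reduces to two copies of `∑_{t < m} (m - 2t)² = m(m² + 2)/3`.
-/

open Finset

theorem sum_range_sub_two_mul_sq (x : ℚ) (m : ℕ) :
    ∑ t ∈ range m, (x - 2 * t) ^ 2 =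
      m * (x ^ 2 - 2 * x * (m - 1) + 2 * (m - 1) * (2 * m - 1) / 3) := by
  induction m with
  | zero => simp
  | succ m ih => rw [sum_range_succ, ih]; push_cast; ring

namespace ZMod

variable {n : ℕ} [NeZero n]

theorem sum_eq_sum_range {M : Type*} [AddCommMonoid M] (f : ZMod n → M) :
    ∑ j : ZMod n, f j = ∑ t ∈ range n, f t :=
  (sum_nbij' (fun t : ℕ => (t : ZMod n)) val (fun _ _ => mem_univ _)
    (fun j _ => mem_range.mpr j.val_lt) (fun _ ht => val_natCast_of_lt (mem_range.mp ht))
    (fun j _ => natCast_zmod_val j) (fun _ _ => rfl)).symm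

theorem val_natCast_sub_of_lt {c : ZMod n} {t : ℕ} (ht : t < c.val) :
    ((t : ZMod n) - c).val = t + (n - c.val) := by
  have htn : t < n := ht.trans c.val_lt
  have hval : (c - t).val = c.val - t := by
    rw [val_sub (by rw [val_natCast_of_lt htn]; exact ht.le), val_natCast_of_lt htn]
  have hne : c - t ≠ 0 := fun h => by rw [h, val_zero] at hval; omega
  rw [← neg_sub, neg_val, if_neg hne, hval]
  have := c.val_lt
  omega

theorem natCast_val_add_sub (c : ZMod n) (s : ℕ) : ((c.val + s : ℕ) : ZMod n) - c = s := by
  push_cast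
  rw [natCast_zmod_val]
  ring

end ZMod

variable {n : ℕ} [NeZero n]

/-- The resistance distance `r(0, u)` on the `n`-cycle. Using `u.val` in place of the geodesic
distance is harmless because `x (n - x)` is invariant under `x ↦ n - x`. -/
def cycleResistance (u : ZMod n) : ℚ := u.val * (n - u.val) / n

theorem cycleResistance_neg (u : ZMod n) : cycleResistance (-u) = cycleResistance u := by
  unfold cycleResistance
  rcases eq_or_ne u 0 with rfl | hu
  · simp
  · rw [ZMod.neg_val, if_neg hu, Nat.cast_sub u.val_lt.le]
    ring

theorem cycleResistance_eq_min (u : ZMod n) :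
    (min u.val (-u).val : ℕ) * ((n : ℚ) - (min u.val (-u).val : ℕ)) / n =
      cycleResistance u := by
  rcases min_choice u.val (-u).val with h | h <;> rw [h]
  · rfl
  · exact cycleResistance_neg u

theorem cycleResistance_natCast_sub_of_lt {c : ZMod n} {t : ℕ} (ht : t < c.val) :
    cycleResistance ((t : ZMod n) - c) - cycleResistance (t : ZMod n) =
      (n - c.val) * (c.val - 2 * t) / n := by
  have htn : t < n := ht.trans c.val_lt
  unfold cycleResistance
  rw [ZMod.val_natCast_sub_of_lt ht, ZMod.val_natCast_of_lt htn]
  push_cast [Nat.cast_sub c.val_lt.le]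
  ring

theorem cycleResistance_natCast_add_sub {c : ZMod n} {s : ℕ} (hs : c.val + s < n) :
    cycleResistance (((c.val + s : ℕ) : ZMod n) - c) -
        cycleResistance ((c.val + s : ℕ) : ZMod n) = -c.val * ((n - c.val) - 2 * s) / n := by
  unfold cycleResistance
  rw [ZMod.natCast_val_add_sub, ZMod.val_natCast_of_lt (by omega), ZMod.val_natCast_of_lt hs]
  push_cast
  ring

theorem sum_cycleResistance_sub_sq (c : ZMod n) :
    ∑ j : ZMod n, (cycleResistance (j - c) - cycleResistance j) ^ 2 =
      cycleResistance c * (n * cycleResistance c + 2) / 3 := by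
  set k := c.val
  have hkn : k ≤ n := c.val_lt.le
  have hsplit := sum_range_add (fun t : ℕ =>
    (cycleResistance ((t : ZMod n) - c) - cycleResistance (t : ZMod n)) ^ 2) k (n - k)
  rw [Nat.add_sub_cancel' hkn] at hsplit
  have hleft : ∀ t ∈ range k,
      (cycleResistance ((t : ZMod n) - c) - cycleResistance (t : ZMod n)) ^ 2 =
        ((n - k) * (k - 2 * t) / n : ℚ) ^ 2 := fun t ht => by
    rw [cycleResistance_natCast_sub_of_lt (mem_range.mp ht)]
  have hright : ∀ s ∈ range (n - k),
      (cycleResistance (((k + s : ℕ) : ZMod n) - c) -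
          cycleResistance ((k + s : ℕ) : ZMod n)) ^ 2 =
        (-k * ((n - k) - 2 * s) / n : ℚ) ^ 2 := fun s hs => by
    rw [cycleResistance_natCast_add_sub (by have := mem_range.mp hs; omega)]
  rw [ZMod.sum_eq_sum_range, hsplit, sum_congr rfl hleft, sum_congr rfl hright]
  simp only [div_pow, mul_pow, neg_mul, even_two, Even.neg_pow, ← sum_div, ← mul_sum,
    sum_range_sub_two_mul_sq]
  unfold cycleResistance
  have hn0 : (n : ℚ) ≠ 0 := Nat.cast_ne_zero.mpr (NeZero.ne n)
  push_cast [Nat.cast_sub hkn]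
  field_simp
  ring

theorem stmt_11_general {n : ℕ} [NeZero n]
    (d : ZMod n → ZMod n → ℕ)
    (hd : ∀ i j : ZMod n, d i j = min (i - j).val (j - i).val)
    (r : ZMod n → ZMod n → ℚ)
    (hr : ∀ i j : ZMod n, r i j = (d i j : ℚ) * ((n : ℚ) - (d i j : ℚ)) / n)
    (a b : ZMod n) :
    ∑ i : ZMod n, (r i a - r i b) ^ 2 =
      (d a b : ℚ) * ((n : ℚ) - (d a b : ℚ)) *
        ((d a b : ℚ) * ((n : ℚ) - (d a b : ℚ)) + 2) / (3 * n) := by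
  have hr' : ∀ i j, r i j = cycleResistance (i - j) := fun i j => by
    rw [hr, hd, ← neg_sub i j, cycleResistance_eq_min]
  have hn0 : (n : ℚ) ≠ 0 := Nat.cast_ne_zero.mpr (NeZero.ne n)
  have hdab : (d a b : ℚ) * ((n : ℚ) - d a b) = n * cycleResistance (a - b) := by
    rw [← hr', hr]
    field_simp
  have htranslate : ∑ i, (r i a - r i b) ^ 2 =
      ∑ j, (cycleResistance (j - (a - b)) - cycleResistance j) ^ 2 :=
    Fintype.sum_equiv (Equiv.subRight b) _ _ fun i => by
      simp only [hr', Equiv.subRight_apply, sub_sub_sub_cancel_right]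
  rw [htranslate, sum_cycleResistance_sub_sq, hdab]
  field_simp

/-- On the `n`-cycle (`n ≥ 3`) with vertices `ZMod n`, geodesic distance
`d(i,j) = min((i−j) mod n, (j−i) mod n)` and resistance distance `r(i,j) = d(i,j)(n−d(i,j))/n`,
for any vertices `a, b` with `d = d(a,b)`:
`Σ_{i} (r(i,a) − r(i,b))² = d(n−d)(d(n−d)+2)/(3n)`. -/
theorem stmt_11 {n : ℕ} (hn : 3 ≤ n) [NeZero n]
    (d : ZMod n → ZMod n → ℕ)
    (hd : ∀ i j : ZMod n, d i j = min (i - j).val (j - i).val)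
    (r : ZMod n → ZMod n → ℚ)
    (hr : ∀ i j : ZMod n, r i j = (d i j : ℚ) * ((n : ℚ) - (d i j : ℚ)) / n)
    (a b : ZMod n) :
    ∑ i : ZMod n, (r i a - r i b) ^ 2 =
      (d a b : ℚ) * ((n : ℚ) - (d a b : ℚ)) *
        ((d a b : ℚ) * ((n : ℚ) - (d a b : ℚ)) + 2) / (3 * n) :=
  stmt_11_general d hd r hr a b
end

section
/- Let w ≥ 1 and let T_w be the w×w real tridiagonal matrix with 2 on the main diagonal, −1 on the first super- and sub-diagonals, and 0 elsewhere. Then T_w is invertible and tr(T_w⁻¹) = w(w + 2)/6. -/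
/-!
The inverse of `T_w` is the discrete Green's function of the path with both ends grounded,
`G a b = min a b * (w + 1 - max a b) / (w + 1)` in 1-based indices: as a function of `a` it is
piecewise linear with a kink of size `w + 1` at `a = b` and vanishes at `a = 0` and `a = w + 1`,
so `T_w G = 1`. Its trace is `∑ a (w + 1 - a) / (w + 1) = w (w + 2) / 6`.
-/

open Matrix Finset

def groundedPathLaplacian (w : ℕ) : Matrix (Fin w) (Fin w) ℝ := fun i j =>
  if i = j then 2 else if i.val + 1 = j.val ∨ j.val + 1 = i.val then -1 else 0

/-- Unnormalised Green's function, indexed by `0, …, w + 1` with the grounded nodes at both ends. -/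
def pathGreen (w a b : ℕ) : ℝ := (min a b : ℕ) * ((w : ℝ) + 1 - (max a b : ℕ))

theorem pathGreen_of_le {w a b : ℕ} (h : a ≤ b) : pathGreen w a b = a * ((w : ℝ) + 1 - b) := by
  simp [pathGreen, h]

theorem pathGreen_of_ge {w a b : ℕ} (h : b ≤ a) : pathGreen w a b = b * ((w : ℝ) + 1 - a) := by
  simp [pathGreen, h]

theorem pathGreen_zero_left (w b : ℕ) : pathGreen w 0 b = 0 := by
  simp [pathGreen]

theorem pathGreen_succ_left {w b : ℕ} (hb : b ≤ w + 1) : pathGreen w (w + 1) b = 0 := by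
  simp [pathGreen_of_ge hb]

theorem pathGreen_second_diff (w a b : ℕ) :
    2 * pathGreen w (a + 1) b - pathGreen w a b - pathGreen w (a + 2) b =
      if a + 1 = b then (w : ℝ) + 1 else 0 := by
  rcases lt_trichotomy (a + 1) b with h | rfl | h
  · rw [if_neg h.ne, pathGreen_of_le (by omega), pathGreen_of_le (by omega),
      pathGreen_of_le (by omega)]
    push_cast
    ring
  · rw [if_pos rfl, pathGreen_of_le le_rfl, pathGreen_of_le (by omega), pathGreen_of_ge (by omega)]
    push_cast
    ring
  · rw [if_neg h.ne', pathGreen_of_ge (by omega), pathGreen_of_ge (by omega),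
      pathGreen_of_ge (by omega)]
    push_cast
    ring

theorem sum_range_ite_eq_of_lt_or_eq_zero {w m : ℕ} (f : ℕ → ℝ) (h : m < w ∨ f m = 0) :
    ∑ k ∈ range w, (if k = m then f k else 0) = f m := by
  simp only [sum_ite_eq', mem_range]
  split_ifs with hm
  · rfl
  · exact (h.resolve_left hm).symm

theorem groundedPathLaplacian_apply (w : ℕ) (i k : Fin w) :
    groundedPathLaplacian w i k =
      2 * (if k.val = i.val then 1 else 0) - (if k.val + 1 = i.val then 1 else 0)
        - (if k.val = i.val + 1 then 1 else 0) := by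
  simp only [groundedPathLaplacian, Fin.ext_iff]
  split_ifs <;> (try omega) <;> norm_num

theorem groundedPathLaplacian_sum_mul {w : ℕ} (f : ℕ → ℝ) (h₀ : f 0 = 0) (hw : f (w + 1) = 0)
    (i : Fin w) :
    ∑ k, groundedPathLaplacian w i k * f (k + 1) = 2 * f (i + 1) - f i - f (i + 2) := by
  have hshift : ∑ k ∈ range w, (if k + 1 = i.val then f (k + 1) else 0) = f i := by
    have := sum_range_succ' (fun k => if k = i.val then f k else 0) w
    rw [sum_range_ite_eq_of_lt_or_eq_zero f (.inl (by omega))] at this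
    simpa [h₀] using this.symm
  have hnext : ∑ k ∈ range w, (if k = i.val + 1 then f (k + 1) else 0) = f (i + 2) :=
    sum_range_ite_eq_of_lt_or_eq_zero (fun k => f (k + 1)) <| by
      by_cases hi : i.val + 1 < w
      · exact .inl hi
      · exact .inr (by rw [show i.val + 1 + 1 = w + 1 by omega, hw])
  have hself : ∑ k ∈ range w, (if k = i.val then f (k + 1) else 0) = f (i + 1) :=
    sum_range_ite_eq_of_lt_or_eq_zero (fun k => f (k + 1)) (.inl i.isLt)
  simp only [groundedPathLaplacian_apply, sub_mul, mul_assoc, ite_mul, one_mul, zero_mul]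
  rw [Fin.sum_univ_eq_sum_range (fun k => 2 * (if k = i.val then f (k + 1) else 0)
      - (if k + 1 = i.val then f (k + 1) else 0) - (if k = i.val + 1 then f (k + 1) else 0)),
    sum_sub_distrib, sum_sub_distrib, ← mul_sum, hself, hshift, hnext]

noncomputable def pathGreenMatrix (w : ℕ) : Matrix (Fin w) (Fin w) ℝ := fun i j =>
  pathGreen w (i + 1) (j + 1) / ((w : ℝ) + 1)

theorem groundedPathLaplacian_mul_pathGreenMatrix (w : ℕ) :
    groundedPathLaplacian w * pathGreenMatrix w = 1 := by
  ext i j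
  have hw : ((w : ℝ) + 1) ≠ 0 := by positivity
  simp only [mul_apply, pathGreenMatrix, mul_div_assoc', ← sum_div]
  rw [groundedPathLaplacian_sum_mul (pathGreen w · (j + 1)) (pathGreen_zero_left w _)
    (pathGreen_succ_left (by omega)), pathGreen_second_diff, one_apply]
  simp only [add_left_inj, Fin.val_inj]
  split_ifs
  · exact div_self hw
  · exact zero_div _

theorem sum_range_succ_mul_sub (n : ℕ) (m : ℝ) :
    ∑ i ∈ range n, ((i : ℝ) + 1) * (m - i) = n * (n + 1) * (3 * m - 2 * n + 2) / 6 := by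
  induction n with
  | zero => simp
  | succ n ih => rw [sum_range_succ, ih]; push_cast; ring

theorem trace_pathGreenMatrix (w : ℕ) : (pathGreenMatrix w).trace = (w : ℝ) * (w + 2) / 6 := by
  have hw : ((w : ℝ) + 1) ≠ 0 := by positivity
  calc (pathGreenMatrix w).trace
      = (∑ i ∈ range w, ((i : ℝ) + 1) * (w - i)) / (w + 1) := by
        simp only [trace, Matrix.diag, pathGreenMatrix, pathGreen_of_le le_rfl, ← sum_div]
        rw [Fin.sum_univ_eq_sum_range (fun i => ((i + 1 : ℕ) : ℝ) * ((w : ℝ) + 1 - (i + 1 : ℕ)))]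
        push_cast
        congr 1
        exact sum_congr rfl fun i _ => by ring
    _ = (w : ℝ) * (w + 2) / 6 := by
        rw [sum_range_succ_mul_sub]
        field_simp
        ring

theorem stmt_13_general {w : ℕ}
    (T : Matrix (Fin w) (Fin w) ℝ)
    (hT : ∀ i j : Fin w, T i j =
      if i = j then 2 else if i.val + 1 = j.val ∨ j.val + 1 = i.val then -1 else 0) :
    IsUnit T ∧ T⁻¹.trace = (w : ℝ) * ((w : ℝ) + 2) / 6 := by
  obtain rfl : T = groundedPathLaplacian w := Matrix.ext hT
  have hinv := groundedPathLaplacian_mul_pathGreenMatrix w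
  exact ⟨.of_mul_eq_one _ hinv, by rw [inv_eq_right_inv hinv, trace_pathGreenMatrix]⟩

/-- Let `T` be the `w × w` tridiagonal matrix with `2` on the diagonal and `−1`
on the first super- and sub-diagonals. Then `T` is invertible and
`tr(T⁻¹) = w(w+2)/6`. -/
theorem stmt_13 {w : ℕ} (hw : 1 ≤ w)
    (T : Matrix (Fin w) (Fin w) ℝ)
    (hT : ∀ i j : Fin w, T i j =
      if i = j then 2 else if i.val + 1 = j.val ∨ j.val + 1 = i.val then -1 else 0) :
    IsUnit T ∧ T⁻¹.trace = (w : ℝ) * ((w : ℝ) + 2) / 6 :=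
  stmt_13_general T hT
end

section
/- Let m ≥ 1 and p ≥ 2 be integers and n = mp. Let C_n be the cycle graph on n vertices with Laplacian L, let S be any set of m vertices (the noise-free leaders), let F be its complement, and let L_F be the principal submatrix of L on F (the grounded Laplacian). Then L_F is positive definite and tr((L_F)⁻¹) ≥ m(p − 1)(p + 1)/6, with equality if and only if the leaders are uniformly distributed around the cycle, i.e., every pair of cyclically consecutive leaders is at geodesic distance p. Hence the uniformly spaced leader sets are exactly the optimal sets of m noise-free leaders on C_n. -/
open Matrix Finset

/-!
Removing the leaders cuts the cycle into arcs: a leader `s`, the followers `s + 1, …, s + g - 1`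
and the next leader `s + g`, where `g` is the gap after `s`. On each arc the grounded Laplacian is
the Dirichlet Laplacian of a path, so its inverse is explicit: between followers at offsets `k, l`
of the same arc the entry is the Green's function `min(k, l) (g - max(k, l)) / g`, and between
different arcs it vanishes. An arc thus contributes `∑_{k<g} k (g - k) / g = (g² - 1) / 6` to the
trace. The gaps add up to `n = m p`, so `∑ (g² - 1) / 6 = m (p² - 1) / 6 + ∑ (g - p)² / 6`, with
equality iff every gap is `p`, i.e. iff the leaders are the translates `s₀ + p k`.
Positive definiteness: extended by zero over the leaders, `x ⬝ᵥ L_F x = ∑ (x (i + 1) - x i)²`, and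
`L_F` is invertible.
-/

namespace CycleLeaders

/-- The Green's function of the path `0, 1, …, g` grounded at both ends. -/
noncomputable def pathGreen (g k l : ℕ) : ℝ :=
  min (k : ℝ) l * (g - max (k : ℝ) l) / g

lemma pathGreen_zero_left (g l : ℕ) : pathGreen g 0 l = 0 := by
  simp [pathGreen]

lemma pathGreen_self_left {g l : ℕ} (hl : l ≤ g) : pathGreen g g l = 0 := by
  simp [pathGreen, hl]

lemma pathGreen_second_diff {g : ℕ} (hg : g ≠ 0) (k l : ℕ) :
    2 * pathGreen g (k + 1) l - pathGreen g k l - pathGreen g (k + 2) l =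
      if k + 1 = l then 1 else 0 := by
  have hg' : (g : ℝ) ≠ 0 := Nat.cast_ne_zero.2 hg
  simp only [pathGreen]
  push_cast
  rcases lt_trichotomy (k + 1) l with h | rfl | h
  · have h' : (k : ℝ) + 2 ≤ l := by exact_mod_cast h
    rw [if_neg h.ne, min_eq_left (by linarith), min_eq_left (by linarith),
      min_eq_left (by linarith), max_eq_right (by linarith), max_eq_right (by linarith),
      max_eq_right (by linarith)]
    field_simp
    ring
  · rw [if_pos rfl]
    push_cast
    rw [min_self, max_self, min_eq_left (by linarith), max_eq_right (by linarith),
      min_eq_right (by linarith), max_eq_left (by linarith)]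
    field_simp
    ring
  · have h' : (l : ℝ) + 2 ≤ k + 2 := by exact_mod_cast (by omega : l + 2 ≤ k + 2)
    rw [if_neg h.ne', min_eq_right (by linarith), min_eq_right (by linarith),
      min_eq_right (by linarith), max_eq_left (by linarith), max_eq_left (by linarith),
      max_eq_left (by linarith)]
    field_simp
    ring

lemma sum_range_mul_sub (g : ℕ) (c : ℝ) :
    ∑ k ∈ range g, (k : ℝ) * (c - k) = c * g * (g - 1) / 2 - g * (g - 1) * (2 * g - 1) / 6 := by
  induction g with
  | zero => simp
  | succ g ih => rw [sum_range_succ, ih]; push_cast; ring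

lemma sum_range_pathGreen_self {g : ℕ} (hg : g ≠ 0) :
    ∑ k ∈ range g, pathGreen g k k = ((g : ℝ) ^ 2 - 1) / 6 := by
  simp only [pathGreen, min_self, max_self, ← sum_div, sum_range_mul_sub]
  field_simp
  ring

variable {n : ℕ} (S : Finset (ZMod n))

noncomputable def backDist (x : ZMod n) : ℕ := sInf {t : ℕ | x - t ∈ S}

noncomputable def prevLeader (x : ZMod n) : ZMod n := x - backDist S x

noncomputable def gap (s : ZMod n) : ℕ := sInf {t : ℕ | 0 < t ∧ s + t ∈ S}

variable {S}

lemma prevLeader_mem [NeZero n] (hS : S.Nonempty) (x : ZMod n) : prevLeader S x ∈ S := by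
  obtain ⟨s, hs⟩ := hS
  exact Nat.sInf_mem (s := {t : ℕ | x - t ∈ S}) ⟨(x - s).val, by simpa using hs⟩

lemma prevLeader_add_backDist (x : ZMod n) : prevLeader S x + backDist S x = x :=
  sub_add_cancel _ _

lemma backDist_eq_zero {x : ZMod n} (hx : x ∈ S) : backDist S x = 0 :=
  Nat.eq_zero_of_le_zero (Nat.sInf_le (by simpa using hx))

lemma backDist_pos [NeZero n] (hS : S.Nonempty) {x : ZMod n} (hx : x ∉ S) : 0 < backDist S x := by
  refine Nat.pos_of_ne_zero fun h => hx ?_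
  simpa [prevLeader, h] using prevLeader_mem hS x

lemma gap_pos_and_add_gap_mem [NeZero n] {s : ZMod n} (hs : s ∈ S) :
    0 < gap S s ∧ s + gap S s ∈ S :=
  Nat.sInf_mem (s := {t : ℕ | 0 < t ∧ s + t ∈ S}) ⟨n, Nat.pos_of_neZero n, by simpa using hs⟩

lemma gap_pos [NeZero n] {s : ZMod n} (hs : s ∈ S) : 0 < gap S s :=
  (gap_pos_and_add_gap_mem hs).1

lemma add_gap_mem [NeZero n] {s : ZMod n} (hs : s ∈ S) : s + gap S s ∈ S :=
  (gap_pos_and_add_gap_mem hs).2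

lemma gap_le {s : ZMod n} {t : ℕ} (ht : 0 < t) (h : s + t ∈ S) : gap S s ≤ t :=
  Nat.sInf_le ⟨ht, h⟩

lemma add_notMem_of_lt_gap {s : ZMod n} {t : ℕ} (ht : 0 < t) (h : t < gap S s) : s + t ∉ S :=
  fun hmem => Nat.notMem_of_lt_sInf h ⟨ht, hmem⟩

lemma sub_notMem_of_lt_backDist {x : ZMod n} {t : ℕ} (h : t < backDist S x) : x - t ∉ S :=
  Nat.notMem_of_lt_sInf h

lemma backDist_add_of_lt_gap {s : ZMod n} (hs : s ∈ S) {k : ℕ} (hk : k < gap S s) :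
    backDist S (s + k) = k := by
  refine le_antisymm (Nat.sInf_le (by simpa using hs)) (not_lt.1 fun hlt => ?_)
  have hmem : s + k - (backDist S (s + k) : ℕ) ∈ S :=
    Nat.sInf_mem (s := {t : ℕ | s + k - t ∈ S}) ⟨k, by simpa using hs⟩
  have : s + k - (backDist S (s + k) : ℕ) = s + ((k - backDist S (s + k) : ℕ) : ZMod n) := by
    push_cast [Nat.cast_sub hlt.le]; ring
  exact add_notMem_of_lt_gap (by omega) (by omega) (this ▸ hmem)

lemma prevLeader_add_of_lt_gap {s : ZMod n} (hs : s ∈ S) {k : ℕ} (hk : k < gap S s) :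
    prevLeader S (s + k) = s := by
  rw [prevLeader, backDist_add_of_lt_gap hs hk, add_sub_cancel_right]

lemma backDist_lt_gap [NeZero n] (hS : S.Nonempty) (x : ZMod n) :
    backDist S x < gap S (prevLeader S x) := by
  obtain ⟨hpos, hmem⟩ := gap_pos_and_add_gap_mem (prevLeader_mem hS x)
  refine not_le.1 fun hle => sub_notMem_of_lt_backDist (S := S) (x := x)
    (t := backDist S x - gap S (prevLeader S x)) (by omega) ?_
  convert hmem using 1
  rw [Nat.cast_sub hle, prevLeader]
  ring

lemma sum_eq_sum_sum_range_gap [NeZero n] (hS : S.Nonempty) {M : Type*} [AddCommMonoid M]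
    (f : ZMod n → M) : ∑ x, f x = ∑ s ∈ S, ∑ k ∈ range (gap S s), f (s + k) := by
  rw [← sum_fiberwise_of_maps_to (fun x _ => prevLeader_mem hS x)]
  refine sum_congr rfl fun s hs => ?_
  refine sum_nbij' (backDist S) (fun k => s + k) ?_ ?_ ?_ ?_ ?_
  · intro x hx
    rw [mem_filter] at hx
    simpa [← hx.2] using backDist_lt_gap hS x
  · intro k hk
    simpa using prevLeader_add_of_lt_gap hs (mem_range.1 hk)
  · intro x hx
    rw [mem_filter] at hx
    simpa [← hx.2] using prevLeader_add_backDist x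
  · intro k hk
    exact backDist_add_of_lt_gap hs (mem_range.1 hk)
  · intro x hx
    rw [mem_filter] at hx
    simp [← hx.2, prevLeader_add_backDist]

lemma sum_gap [NeZero n] (hS : S.Nonempty) : ∑ s ∈ S, gap S s = n := by
  simpa using (sum_eq_sum_sum_range_gap hS fun _ => (1 : ℕ)).symm

def cycleLaplacian (n : ℕ) : Matrix (ZMod n) (ZMod n) ℝ :=
  of fun i j => if i = j then 2 else if i - j = 1 ∨ j - i = 1 then -1 else 0

lemma isHermitian_cycleLaplacian [NeZero n] : (cycleLaplacian n).IsHermitian := by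
  ext i j
  simp [cycleLaplacian, eq_comm, or_comm]

lemma eq_add_one_of_two_eq_zero [NeZero n] (h2 : (2 : ZMod n) = 0) {i k : ZMod n} (hk : k ≠ i) :
    k = i + 1 := by
  have hn : n ≤ 2 := Nat.le_of_dvd two_pos ((ZMod.natCast_eq_zero_iff 2 n).1 (by exact_mod_cast h2))
  have hlt := ZMod.val_lt (k - i)
  have hne : (k - i).val ≠ 0 := (ZMod.val_ne_zero _).2 (sub_ne_zero.2 hk)
  have h1 : (k - i).val = 1 := by omega
  rw [← sub_eq_iff_eq_add', ← ZMod.natCast_zmod_val (k - i), h1, Nat.cast_one]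

lemma cycleLaplacian_mulVec_apply [NeZero n] (hS : S.Nonempty) {f : ZMod n → ℝ}
    (hf : ∀ s ∈ S, f s = 0) {i : ZMod n} (hi : i ∉ S) :
    (cycleLaplacian n *ᵥ f) i = 2 * f i - f (i - 1) - f (i + 1) := by
  obtain ⟨s, hs⟩ := hS
  have hsi : s ≠ i := by rintro rfl; exact hi hs
  have h10 : (1 : ZMod n) ≠ 0 := fun h => hsi (eq_of_zero_eq_one h.symm s i)
  by_cases h2 : (2 : ZMod n) = 0
  -- `n = 2`: both neighbours of `i` are the leader `i + 1 = i - 1`, and row `i` has a single `-1`.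
  · have hS1 : i + 1 ∈ S := eq_add_one_of_two_eq_zero h2 hsi ▸ hs
    have hsub : i - 1 = i + 1 := by linear_combination -h2
    rw [mulVec, dotProduct, Fintype.sum_eq_single i fun k hk => ?_, hsub, hf _ hS1]
    · simp [cycleLaplacian]
    · rw [hf k (eq_add_one_of_two_eq_zero h2 hk ▸ hS1), mul_zero]
  · have hL : ∀ k, cycleLaplacian n i k =
        (if k = i then 2 else 0) - (if k = i - 1 then 1 else 0) - (if k = i + 1 then 1 else 0) := by
      have hsucc : i + 1 ≠ i := fun h => h10 (by linear_combination h)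
      have hpred : i - 1 ≠ i := fun h => h10 (by linear_combination -h)
      have hpred_succ : i - 1 ≠ i + 1 := fun h => h2 (by linear_combination -h)
      intro k
      have e1 : i - k = 1 ↔ k = i - 1 := by constructor <;> intro h <;> linear_combination -h
      have e2 : k - i = 1 ↔ k = i + 1 := sub_eq_iff_eq_add'
      simp only [cycleLaplacian, of_apply, e1, e2]
      grind
    simp [mulVec, dotProduct, hL, sub_mul, sum_sub_distrib, ite_mul]

lemma dotProduct_cycleLaplacian_mulVec [NeZero n] (hS : S.Nonempty) {f : ZMod n → ℝ}
    (hf : ∀ s ∈ S, f s = 0) : f ⬝ᵥ (cycleLaplacian n *ᵥ f) = ∑ i, (f (i + 1) - f i) ^ 2 := by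
  have hrow : ∀ i, f i * (cycleLaplacian n *ᵥ f) i = f i * (2 * f i - f (i - 1) - f (i + 1)) := by
    intro i
    by_cases hi : i ∈ S
    · simp [hf i hi]
    · rw [cycleLaplacian_mulVec_apply hS hf hi]
  have hshift : ∀ g : ZMod n → ℝ, ∑ i, g (i + 1) = ∑ i, g i :=
    fun g => Fintype.sum_equiv (Equiv.addRight 1) _ _ fun _ => rfl
  have hprev : ∑ i, f i * f (i - 1) = ∑ i, f (i + 1) * f i := by
    rw [← hshift]; simp
  simp only [dotProduct, hrow]
  have hsq : ∑ i, f (i + 1) ^ 2 = ∑ i, f i ^ 2 := hshift (fun i => f i ^ 2)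
  calc ∑ i, f i * (2 * f i - f (i - 1) - f (i + 1))
      = ∑ i, f (i + 1) ^ 2 + ∑ i, f i ^ 2 - ∑ i, f i * f (i - 1) - ∑ i, f i * f (i + 1) := by
        rw [hsq, ← sum_add_distrib, ← sum_sub_distrib, ← sum_sub_distrib]
        exact sum_congr rfl fun i _ => by ring
    _ = ∑ i, (f (i + 1) - f i) ^ 2 := by
        rw [hprev, ← sum_add_distrib, ← sum_sub_distrib, ← sum_sub_distrib]
        exact sum_congr rfl fun i _ => by ring

variable (S) in
noncomputable def greenMatrix : Matrix (ZMod n) (ZMod n) ℝ :=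
  of fun x y => if prevLeader S x = prevLeader S y then
    pathGreen (gap S (prevLeader S x)) (backDist S x) (backDist S y) else 0

lemma greenMatrix_of_mem {x : ZMod n} (hx : x ∈ S) (y : ZMod n) : greenMatrix S x y = 0 := by
  simp [greenMatrix, backDist_eq_zero hx, pathGreen_zero_left]

lemma greenMatrix_add_apply [NeZero n] (hS : S.Nonempty) {s : ZMod n} (hs : s ∈ S) {k : ℕ}
    (hk : k ≤ gap S s) (y : ZMod n) :
    greenMatrix S (s + k) y =
      if prevLeader S y = s then pathGreen (gap S s) k (backDist S y) else 0 := by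
  rcases hk.lt_or_eq with hk | rfl
  · simp only [greenMatrix, of_apply, prevLeader_add_of_lt_gap hs hk,
      backDist_add_of_lt_gap hs hk, eq_comm]
  · rw [greenMatrix_of_mem (add_gap_mem hs)]
    split_ifs with hy
    · rw [pathGreen_self_left (hy ▸ (backDist_lt_gap hS y).le)]
    · rfl

lemma cycleLaplacian_mul_greenMatrix_apply [NeZero n] (hS : S.Nonempty) {i : ZMod n}
    (hi : i ∉ S) (j : ZMod n) :
    (cycleLaplacian n * greenMatrix S) i j = (1 : Matrix (ZMod n) (ZMod n) ℝ) i j := by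
  obtain ⟨k, hk⟩ : ∃ k, backDist S i = k + 1 := Nat.exists_eq_add_of_le' (backDist_pos hS hi)
  have hs := prevLeader_mem hS i
  have hlt : k + 2 ≤ gap S (prevLeader S i) := by have := backDist_lt_gap hS i; omega
  have hi' := prevLeader_add_backDist (S := S) i
  generalize prevLeader S i = s at hs hlt hi'
  rw [hk] at hi'
  subst hi'
  have e1 : s + ((k + 1 : ℕ) : ZMod n) - 1 = s + (k : ZMod n) := by push_cast; ring
  have e2 : s + ((k + 1 : ℕ) : ZMod n) + 1 = s + ((k + 2 : ℕ) : ZMod n) := by push_cast; ring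
  change (cycleLaplacian n *ᵥ fun k => greenMatrix S k j) _ = _
  rw [cycleLaplacian_mulVec_apply hS (fun x hx => greenMatrix_of_mem hx j) hi, e1, e2,
    greenMatrix_add_apply hS hs (by omega), greenMatrix_add_apply hS hs (by omega),
    greenMatrix_add_apply hS hs (by omega), one_apply]
  by_cases hj : prevLeader S j = s
  · rw [if_pos hj, if_pos hj, if_pos hj, pathGreen_second_diff (gap_pos hs).ne']
    congr 1
    refine propext ⟨fun h => ?_, ?_⟩
    · rw [h, ← hj, prevLeader_add_backDist]
    · rintro rfl
      rw [backDist_add_of_lt_gap hs (by omega)]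
  · rw [if_neg hj, if_neg hj, if_neg hj, if_neg]
    · ring
    · rintro rfl
      exact hj (prevLeader_add_of_lt_gap hs (by omega))

lemma trace_greenMatrix [NeZero n] (hS : S.Nonempty) :
    (greenMatrix S).trace = ∑ s ∈ S, ((gap S s : ℝ) ^ 2 - 1) / 6 := by
  rw [trace, sum_eq_sum_sum_range_gap hS]
  refine sum_congr rfl fun s hs => ?_
  rw [← sum_range_pathGreen_self (gap_pos hs).ne']
  refine sum_congr rfl fun k hk => ?_
  rw [diag_apply, greenMatrix_add_apply hS hs (mem_range.1 hk).le,
    prevLeader_add_of_lt_gap hs (mem_range.1 hk), if_pos rfl,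
    backDist_add_of_lt_gap hs (mem_range.1 hk)]

section Grounded

variable [NeZero n]

lemma sum_subtype_compl_eq_sum {M : Type*} [AddCommMonoid M] {f : ZMod n → M}
    (hf : ∀ s ∈ S, f s = 0) : ∑ i : {x // x ∈ Sᶜ}, f i = ∑ i, f i := by
  rw [sum_coe_sort Sᶜ f]
  exact sum_subset (subset_univ _) fun x _ hx => hf x (by simpa using hx)

variable (S) in
def groundedLaplacian : Matrix {x // x ∈ Sᶜ} {x // x ∈ Sᶜ} ℝ :=
  (cycleLaplacian n).submatrix (↑) (↑)

lemma groundedLaplacian_mul_greenMatrix (hS : S.Nonempty) :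
    groundedLaplacian S * (greenMatrix S).submatrix (↑) (↑) = 1 := by
  ext i j
  rw [mul_apply]
  simp only [groundedLaplacian, submatrix_apply]
  rw [sum_subtype_compl_eq_sum (f := fun k => cycleLaplacian n i k * greenMatrix S k j)
    fun s hs => by rw [greenMatrix_of_mem hs, mul_zero], ← mul_apply,
    cycleLaplacian_mul_greenMatrix_apply hS (mem_compl.1 i.2)]
  simp [one_apply]

lemma trace_inv_groundedLaplacian (hS : S.Nonempty) :
    (groundedLaplacian S)⁻¹.trace = ∑ s ∈ S, ((gap S s : ℝ) ^ 2 - 1) / 6 := by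
  rw [inv_eq_right_inv (groundedLaplacian_mul_greenMatrix hS), ← trace_greenMatrix hS]
  exact sum_subtype_compl_eq_sum fun s hs => greenMatrix_of_mem hs s

lemma posDef_groundedLaplacian (hS : S.Nonempty) : (groundedLaplacian S).PosDef := by
  refine PosSemidef.posDef_iff_isUnit ?_ |>.2 <|
    (isUnit_iff_isUnit_det _).2 (isUnit_det_of_right_inverse (groundedLaplacian_mul_greenMatrix hS))
  refine .of_dotProduct_mulVec_nonneg (isHermitian_cycleLaplacian.submatrix _) fun x => ?_
  set f : ZMod n → ℝ := fun k => if h : k ∈ Sᶜ then x ⟨k, h⟩ else 0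
  have hf : ∀ s ∈ S, f s = 0 := fun s hs => dif_neg (by simpa using hs)
  have hx : x = fun i : {x // x ∈ Sᶜ} => f i := funext fun i => by simp [f, mem_compl.1 i.2]
  calc 0 ≤ ∑ i, (f (i + 1) - f i) ^ 2 := sum_nonneg fun _ _ => sq_nonneg _
    _ = f ⬝ᵥ (cycleLaplacian n *ᵥ f) := (dotProduct_cycleLaplacian_mulVec hS hf).symm
    _ = star x ⬝ᵥ (groundedLaplacian S *ᵥ x) := by
      have hrow : ∀ i, ∑ j : {x // x ∈ Sᶜ}, cycleLaplacian n i j * f j =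
          ∑ j, cycleLaplacian n i j * f j := fun i =>
        sum_subtype_compl_eq_sum (f := fun j => cycleLaplacian n i j * f j)
          fun s hs => by rw [hf s hs, mul_zero]
      rw [hx]
      simp only [dotProduct, mulVec, groundedLaplacian, submatrix_apply, star_trivial, hrow]
      exact (sum_subtype_compl_eq_sum (f := fun i => f i * ∑ j, cycleLaplacian n i j * f j)
        fun s hs => by rw [hf s hs, zero_mul]).symm

end Grounded

lemma sum_sq_sub_one_div_six {ι : Type*} (T : Finset ι) (a : ι → ℝ) {c : ℝ}
    (hsum : ∑ i ∈ T, a i = #T * c) :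
    ∑ i ∈ T, (a i ^ 2 - 1) / 6 = #T * (c - 1) * (c + 1) / 6 + (∑ i ∈ T, (a i - c) ^ 2) / 6 := by
  have hexp : ∑ i ∈ T, (a i - c) ^ 2 = ∑ i ∈ T, a i ^ 2 - 2 * c * ∑ i ∈ T, a i + #T * c ^ 2 := by
    simp only [sub_sq, sum_add_distrib, sum_sub_distrib, sum_const, nsmul_eq_mul, ← sum_mul,
      ← mul_sum]
    ring
  rw [hexp, hsum, ← sum_div, sum_sub_distrib, sum_const, nsmul_eq_mul]
  ring

section Uniform

variable {m p : ℕ}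

def uniformLeaders (m p : ℕ) (s₀ : ZMod n) : Finset (ZMod n) :=
  Finset.image (fun i : Fin m => s₀ + ((p * i.val : ℕ) : ZMod n)) Finset.univ

variable [NeZero n]

lemma mem_uniformLeaders (hn : n = m * p) {s₀ x : ZMod n} :
    x ∈ uniformLeaders m p s₀ ↔ ∃ k : ℕ, x = s₀ + ((p * k : ℕ) : ZMod n) := by
  refine ⟨fun hx => ?_, ?_⟩
  · obtain ⟨i, -, rfl⟩ := mem_image.1 hx
    exact ⟨i, rfl⟩
  · rintro ⟨k, rfl⟩
    have hm : 0 < m := (CanonicallyOrderedAdd.mul_pos.1 (hn ▸ Nat.pos_of_neZero n)).1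
    refine mem_image.2 ⟨⟨k % m, Nat.mod_lt _ hm⟩, mem_univ _, ?_⟩
    rw [← Nat.mul_mod_mul_left, mul_comm p m, ← hn, ZMod.natCast_mod]

lemma card_uniformLeaders (hn : n = m * p) (s₀ : ZMod n) : #(uniformLeaders m p s₀) = m := by
  have hp : 0 < p := (CanonicallyOrderedAdd.mul_pos.1 (hn ▸ Nat.pos_of_neZero n)).2
  have hlt (i : Fin m) : p * i < n := by
    rw [hn, mul_comm m]
    exact Nat.mul_lt_mul_of_pos_left i.isLt hp
  refine (card_image_of_injective _ fun i j hij => ?_).trans (card_fin m)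
  have h := congrArg ZMod.val (add_left_cancel hij)
  rw [ZMod.val_natCast_of_lt (hlt i), ZMod.val_natCast_of_lt (hlt j)] at h
  exact Fin.ext (Nat.eq_of_mul_eq_mul_left hp h)

lemma forall_gap_eq_iff (hn : n = m * p) {S : Finset (ZMod n)} (hcard : #S = m) :
    (∀ s ∈ S, gap S s = p) ↔ ∃ s₀, S = uniformLeaders m p s₀ := by
  obtain ⟨hm, hp⟩ := CanonicallyOrderedAdd.mul_pos.1 (hn ▸ Nat.pos_of_neZero n)
  obtain ⟨s₀, hs₀⟩ : S.Nonempty := card_pos.1 (hcard ▸ hm)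
  refine ⟨fun h => ⟨s₀, ?_⟩, ?_⟩
  · have hmem : ∀ k : ℕ, s₀ + ((p * k : ℕ) : ZMod n) ∈ S := by
      intro k
      induction k with
      | zero => simpa using hs₀
      | succ k ih =>
        convert add_gap_mem ih using 1
        rw [h _ ih]
        push_cast
        ring
    refine (eq_of_subset_of_card_le (fun x hx => ?_) ?_).symm
    · obtain ⟨k, rfl⟩ := (mem_uniformLeaders hn).1 hx
      exact hmem k
    · rw [hcard, card_uniformLeaders hn]
  · rintro ⟨t₀, rfl⟩
    have hle : ∀ s ∈ uniformLeaders m p t₀, gap (uniformLeaders m p t₀) s ≤ p := by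
      intro s hs
      obtain ⟨k, rfl⟩ := (mem_uniformLeaders hn).1 hs
      refine gap_le hp ((mem_uniformLeaders hn).2 ⟨k + 1, ?_⟩)
      push_cast
      ring
    refine (sum_eq_sum_iff_of_le hle).1 ?_
    rw [sum_gap ⟨s₀, hs₀⟩, sum_const, hcard, smul_eq_mul, hn]

end Uniform

end CycleLeaders

open CycleLeaders

theorem stmt_16_general {m p n : ℕ} (hn : n = m * p) [NeZero n]
    (L : Matrix (ZMod n) (ZMod n) ℝ)
    (hLdef : ∀ i j : ZMod n,
      L i j = if i = j then 2 else if i - j = 1 ∨ j - i = 1 then -1 else 0)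
    (S : Finset (ZMod n)) (hcard : S.card = m)
    (LF : Matrix {x // x ∈ Sᶜ} {x // x ∈ Sᶜ} ℝ)
    (hLF : LF = L.submatrix (fun i : {x // x ∈ Sᶜ} => (i : ZMod n))
      (fun j : {x // x ∈ Sᶜ} => (j : ZMod n))) :
    LF.PosDef ∧
    (m : ℝ) * ((p : ℝ) - 1) * ((p : ℝ) + 1) / 6 ≤ LF⁻¹.trace ∧
    (LF⁻¹.trace = (m : ℝ) * ((p : ℝ) - 1) * ((p : ℝ) + 1) / 6 ↔
      ∃ s₀ : ZMod n,
        S = Finset.image (fun i : Fin m => s₀ + ((p * i.val : ℕ) : ZMod n)) Finset.univ) := by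
  have hL : L = cycleLaplacian n := Matrix.ext hLdef
  obtain rfl : LF = groundedLaplacian S := hLF.trans (by rw [hL]; rfl)
  have hS : S.Nonempty :=
    card_pos.1 (hcard ▸ (CanonicallyOrderedAdd.mul_pos.1 (hn ▸ Nat.pos_of_neZero n)).1)
  have hsum : ∑ s ∈ S, (gap S s : ℝ) = #S * p := by
    rw [← Nat.cast_sum, sum_gap hS, hcard, hn, Nat.cast_mul]
  have htr : (groundedLaplacian S)⁻¹.trace =
      m * (p - 1) * (p + 1) / 6 + (∑ s ∈ S, ((gap S s : ℝ) - p) ^ 2) / 6 := by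
    rw [trace_inv_groundedLaplacian hS, sum_sq_sub_one_div_six S _ hsum, hcard]
  have hsq : 0 ≤ ∑ s ∈ S, ((gap S s : ℝ) - p) ^ 2 := sum_nonneg fun _ _ => sq_nonneg _
  refine ⟨posDef_groundedLaplacian hS, by rw [htr]; linarith, ?_⟩
  rw [htr, add_eq_left, div_eq_zero_iff, or_iff_left (by norm_num),
    sum_eq_zero_iff_of_nonneg fun _ _ => sq_nonneg _]
  simp only [sq_eq_zero_iff, sub_eq_zero, Nat.cast_inj]
  exact forall_gap_eq_iff hn hcard

/-- Optimal `m` noise-free leaders on a cycle. Let `n = mp` with `m ≥ 1`,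
`p ≥ 2`, let `L` be the Laplacian of the cycle `C_n` (vertices `ZMod n`), let `S` be any set of
`m` leaders with complement `F = Sᶜ`, and let `L_F` be the grounded Laplacian (the principal
submatrix of `L` on `F`). Then `L_F` is positive definite and
`tr((L_F)⁻¹) ≥ m(p−1)(p+1)/6`, with equality iff the leaders are uniformly distributed around
the cycle, i.e., `S = {s₀, s₀ + p, …, s₀ + (m−1)p}` for some `s₀` (so that every pair of
cyclically consecutive leaders is at geodesic distance `p`). -/
theorem stmt_16 {m p n : ℕ} (hm : 1 ≤ m) (hp : 2 ≤ p) (hn : n = m * p) [NeZero n]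
    (L : Matrix (ZMod n) (ZMod n) ℝ)
    (hLdef : ∀ i j : ZMod n,
      L i j = if i = j then 2 else if i - j = 1 ∨ j - i = 1 then -1 else 0)
    (S : Finset (ZMod n)) (hcard : S.card = m)
    (LF : Matrix {x // x ∈ Sᶜ} {x // x ∈ Sᶜ} ℝ)
    (hLF : LF = L.submatrix (fun i : {x // x ∈ Sᶜ} => (i : ZMod n))
      (fun j : {x // x ∈ Sᶜ} => (j : ZMod n))) :
    LF.PosDef ∧
    (m : ℝ) * ((p : ℝ) - 1) * ((p : ℝ) + 1) / 6 ≤ LF⁻¹.trace ∧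
    (LF⁻¹.trace = (m : ℝ) * ((p : ℝ) - 1) * ((p : ℝ) + 1) / 6 ↔
      ∃ s₀ : ZMod n,
        S = Finset.image (fun i : Fin m => s₀ + ((p * i.val : ℕ) : ZMod n)) Finset.univ) :=
  stmt_16_general hn L hLdef S hcard LF hLF
end
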